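/- arXiv:math/0601592 — 6 statements merged into one kernel-verified Lean document; each statement's English description precedes it below -/
import Mathlib

section
/- For every k ≥ 3 and every n ≥ 0, the Hanoi Towers group H(k) acts transitively on the set of words of length n over X = {0,…,k−1}: for any two words u, v of length n there exists g ∈ H(k) with g(u) = v. -/
/-- The generator `a_{(ij)}` of the Hanoi Towers group, acting on finite words:
`a_{(ij)}(iw) = jw`, `a_{(ij)}(jw) = iw`, `a_{(ij)}(xw) = x · a_{(ij)}(w)` for `x ∉ {i,j}`,
and `a_{(ij)}(ε) = ε`. -/
def hMove {k : ℕ} (i j : Fin k) : List (Fin k) → List (Fin k)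
  | [] => []
  | x :: w => if x = i then j :: w else if x = j then i :: w else x :: hMove i j w

theorem hMove_involutive {k : ℕ} (i j : Fin k) : ∀ l, hMove i j (hMove i j l) = l := by
  intro l
  induction l with
  | nil => rfl
  | cons x w ih =>
    by_cases hxi : x = i
    · by_cases hij : j = i <;> simp [hMove, hxi, hij]
    · by_cases hxj : x = j
      · by_cases hij : j = i <;> simp [hMove, hxi, hxj, hij]
      · simp [hMove, hxi, hxj, ih]

/-- The generator `a_{(ij)}` as a permutation of the set of finite words. -/
def hGen {k : ℕ} (i j : Fin k) : Equiv.Perm (List (Fin k)) :=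
  ⟨hMove i j, hMove i j, hMove_involutive i j, hMove_involutive i j⟩

/-- The Hanoi Towers group `H(k)`, the subgroup of the permutation group of the set of
finite words over `{0, …, k-1}` generated by the `a_{(ij)}` for `i < j`. -/
def HanoiGroup (k : ℕ) : Subgroup (Equiv.Perm (List (Fin k))) :=
  Subgroup.closure {g | ∃ i j : Fin k, i < j ∧ g = hGen i j}

theorem hMove_length {k : ℕ} (i j : Fin k) (l : List (Fin k)) :
    (hMove i j l).length = l.length := by
  induction l with
  | nil => rfl
  | cons x w ih =>
    by_cases hxi : x = i
    · by_cases hij : j = i <;> simp [hMove, hxi, hij]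
    · by_cases hxj : x = j
      · by_cases hij : j = i <;> simp [hMove, hxi, hxj, hij]
      · simp [hMove, hxi, hxj, ih]

lemma hMove_comm {k : ℕ} (i j : Fin k) : hMove i j = hMove j i := by
  funext l
  induction l with
  | nil => rfl
  | cons x w ih =>
    by_cases hxi : x = i <;> by_cases hxj : x = j <;>
      simp_all [hMove]

lemma hGen_mem {k : ℕ} {i j : Fin k} (h : i ≠ j) : hGen i j ∈ HanoiGroup k := by
  rcases lt_or_gt_of_ne h with hlt | hgt
  · exact Subgroup.subset_closure ⟨i, j, hlt, rfl⟩
  · have he : hGen i j = hGen j i :=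
      Equiv.ext fun l => congrFun (hMove_comm i j) l
    rw [he]
    exact Subgroup.subset_closure ⟨j, i, hgt, rfl⟩

lemma exists_third {k : ℕ} (hk : 3 ≤ k) (i j : Fin k) :
    ∃ m : Fin k, m ≠ i ∧ m ≠ j := by
  have hcard : ({i, j} : Finset (Fin k)).card ≤ 2 := by
    refine (Finset.card_insert_le _ _).trans ?_
    simp
  have : (({i, j} : Finset (Fin k))ᶜ).Nonempty := by
    rw [← Finset.card_pos, Finset.card_compl, Fintype.card_fin]
    omega
  obtain ⟨m, hm⟩ := this
  simp only [Finset.mem_compl, Finset.mem_insert, Finset.mem_singleton, not_or] at hm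
  exact ⟨m, hm.1, hm.2⟩

lemma hGen_cons_ne {k : ℕ} {i j y : Fin k} (hyi : y ≠ i) (hyj : y ≠ j)
    (s : List (Fin k)) : hGen i j (y :: s) = y :: hGen i j s := by
  show hMove i j (y :: s) = y :: hMove i j s
  simp [hMove, hyi, hyj]

lemma hGen_cons_fst {k : ℕ} (i j : Fin k) (s : List (Fin k)) :
    hGen i j (i :: s) = j :: s := by
  show hMove i j (i :: s) = j :: s
  simp [hMove]

lemma hGen_cons_snd {k : ℕ} (i j : Fin k) (s : List (Fin k)) :
    hGen i j (j :: s) = i :: s := by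
  show hMove i j (j :: s) = i :: s
  by_cases h : j = i <;> simp [hMove, h]

/-- Recurrence: for any letter `y` and any `g ∈ H(k)` there is `h ∈ H(k)` fixing
the first letter `y` and acting as `g` on the tail. -/
lemma hanoi_lift {k : ℕ} (hk : 3 ≤ k) (y : Fin k) :
    ∀ g ∈ HanoiGroup k, ∃ h ∈ HanoiGroup k, ∀ s, h (y :: s) = y :: g s := by
  intro g hg
  induction hg using Subgroup.closure_induction with
  | mem g hgS =>
    obtain ⟨i, j, hij, rfl⟩ := hgS
    have hijne : i ≠ j := hij.ne
    by_cases hyi : y = i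
    · subst hyi
      obtain ⟨m, hmy, hmj⟩ := exists_third hk y j
      refine ⟨hGen y m * hGen y j * hGen y m, ?_, ?_⟩
      · exact mul_mem (mul_mem (hGen_mem hmy.symm) (hGen_mem hijne)) (hGen_mem hmy.symm)
      · intro s
        rw [Equiv.Perm.mul_apply, Equiv.Perm.mul_apply, hGen_cons_fst,
          hGen_cons_ne hmy hmj, hGen_cons_snd]
    · by_cases hyj : y = j
      · subst hyj
        obtain ⟨m, hmi, hmy⟩ := exists_third hk i y
        refine ⟨hGen y m * hGen i y * hGen y m, ?_, ?_⟩
        · exact mul_mem (mul_mem (hGen_mem hmy.symm) (hGen_mem hijne)) (hGen_mem hmy.symm)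
        · intro s
          rw [Equiv.Perm.mul_apply, Equiv.Perm.mul_apply, hGen_cons_fst,
            hGen_cons_ne hmi hmy, hGen_cons_snd]
      · exact ⟨hGen i j, hGen_mem hijne, fun s => hGen_cons_ne hyi hyj s⟩
  | one => exact ⟨1, one_mem _, fun s => rfl⟩
  | mul g1 g2 hg1 hg2 ih1 ih2 =>
    obtain ⟨h1, hh1, hs1⟩ := ih1
    obtain ⟨h2, hh2, hs2⟩ := ih2
    refine ⟨h1 * h2, mul_mem hh1 hh2, fun s => ?_⟩
    rw [Equiv.Perm.mul_apply, hs2, hs1, Equiv.Perm.mul_apply]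
  | inv g hgm ih =>
    obtain ⟨h, hh, hs⟩ := ih
    refine ⟨h⁻¹, inv_mem hh, fun s => ?_⟩
    have := hs (g⁻¹ s)
    rw [show g (g⁻¹ s) = s from g.apply_symm_apply s] at this
    rw [← this, show h⁻¹ (h (y :: g⁻¹ s)) = y :: g⁻¹ s from h.symm_apply_apply _]

/-- For every `k ≥ 3` and every `n`, the Hanoi Towers group `H(k)` acts
transitively on the set of words of length `n` over `{0, …, k-1}`. -/
theorem hanoi_level_transitive (k : ℕ) (hk : 3 ≤ k) (n : ℕ)
    (u v : List (Fin k)) (hu : u.length = n) (hv : v.length = n) :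
    ∃ g ∈ HanoiGroup k, g u = v := by
  induction n generalizing u v with
  | zero =>
    rw [List.length_eq_zero_iff] at hu hv
    exact ⟨1, one_mem _, by simp [hu, hv]⟩
  | succ n ih =>
    obtain ⟨x, w, rfl⟩ : ∃ x w, u = x :: w := by
      cases u with
      | nil => simp at hu
      | cons a b => exact ⟨a, b, rfl⟩
    obtain ⟨y, w', rfl⟩ : ∃ y w', v = y :: w' := by
      cases v with
      | nil => simp at hv
      | cons a b => exact ⟨a, b, rfl⟩
    simp only [List.length_cons, Nat.succ.injEq] at hu hv
    obtain ⟨g', hg', hgw⟩ := ih w w' hu hv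
    obtain ⟨h, hh, hhs⟩ := hanoi_lift hk y g' hg'
    by_cases hxy : x = y
    · subst hxy
      exact ⟨h, hh, by rw [hhs, hgw]⟩
    · refine ⟨h * hGen x y, mul_mem hh (hGen_mem hxy), ?_⟩
      rw [Equiv.Perm.mul_apply, hGen_cons_fst, hhs, hgw]
end

section
/- The Hanoi Towers group H(3) is contracting: there exists N such that for every g ∈ H(3) with word length |g| ≥ N (with respect to the generating set {a_{(01)}, a_{(02)}, a_{(12)}}) and every x ∈ {0,1,2}, the section g_x belongs to H(3) and satisfies |g_x| < |g|. -/
/-- Word length of a group element with respect to a set `S` of generators: the least `m`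
such that `g` is a product of `m` elements of `S` (and `0` if no such `m` exists). -/
noncomputable def wordLength {G : Type*} [Group G] (S : Set G) (g : G) : ℕ :=
  sInf {m | ∃ l : List G, l.length = m ∧ (∀ s ∈ l, s ∈ S) ∧ l.prod = g}

/-- The section of a permutation `g` of the set of finite words at the letter `x`:
`g_x(w)` is the word obtained from `g(xw)` by deleting its first letter. -/
def wordSection {k : ℕ} (g : Equiv.Perm (List (Fin k))) (x : Fin k) :
    List (Fin k) → List (Fin k) :=
  fun w => (g (x :: w)).tail

section Aux

/-- The transposition of `i` and `j` acting on a single letter. -/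
def tr3 {k : ℕ} (i j y : Fin k) : Fin k := if y = i then j else if y = j then i else y

/-- First letter of the image of `x :: w` under the product of the generators
indexed by the list of pairs `l`. -/
def letterL {k : ℕ} : List (Fin k × Fin k) → Fin k → Fin k
  | [], x => x
  | p :: t, x => tr3 p.1 p.2 (letterL t x)

/-- The section at `x` of the product of the generators indexed by `l`, as a list of pairs. -/
def secL {k : ℕ} : List (Fin k × Fin k) → Fin k → List (Fin k × Fin k)
  | [], _ => []
  | p :: t, x =>
      if letterL t x = p.1 ∨ letterL t x = p.2 then secL t x else p :: secL t x

def genOf {k : ℕ} (p : Fin k × Fin k) : Equiv.Perm (List (Fin k)) := hGen p.1 p.2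

lemma hGen_apply {k : ℕ} (i j : Fin k) (l : List (Fin k)) : hGen i j l = hMove i j l := rfl

lemma prod_section {k : ℕ} (l : List (Fin k × Fin k)) (x : Fin k) (w : List (Fin k)) :
    (l.map genOf).prod (x :: w) = letterL l x :: ((secL l x).map genOf).prod w := by
  induction l with
  | nil => simp [letterL, secL]
  | cons p t ih =>
    have : ((p :: t).map genOf).prod (x :: w)
        = genOf p ((t.map genOf).prod (x :: w)) := by
      simp [List.prod_cons]
    rw [this, ih]
    set y := letterL t x with hy
    by_cases h1 : y = p.1
    · simp [genOf, hGen_apply, hMove, secL, letterL, h1, ← hy, tr3]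
    · by_cases h2 : y = p.2
      · simp only [genOf, hGen_apply, hMove, secL, letterL, h1, h2, ← hy, tr3,
          if_neg, if_true, if_false, eq_self_iff_true, or_true]
        split <;> simp_all
      · simp [genOf, hGen_apply, hMove, secL, letterL, h1, h2, ← hy, tr3, List.prod_cons]

lemma secL_length_le {k : ℕ} (l : List (Fin k × Fin k)) (x : Fin k) :
    (secL l x).length ≤ l.length := by
  induction l with
  | nil => simp [secL]
  | cons p t ih =>
    by_cases h : letterL t x = p.1 ∨ letterL t x = p.2 <;>
      simp [secL, h] <;> omega

lemma secL_subset {k : ℕ} (l : List (Fin k × Fin k)) (x : Fin k) :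
    ∀ p ∈ secL l x, p ∈ l := by
  induction l with
  | nil => simp [secL]
  | cons q t ih =>
    intro p hp
    by_cases h : letterL t x = q.1 ∨ letterL t x = q.2
    · simp only [secL, if_pos h] at hp
      exact List.mem_cons_of_mem _ (ih p hp)
    · simp only [secL, if_neg h, List.mem_cons] at hp
      rcases hp with rfl | hp
      · exact List.mem_cons_self
      · exact List.mem_cons_of_mem _ (ih p hp)

lemma secL_eq_length {k : ℕ} (l : List (Fin k × Fin k)) (x : Fin k)
    (h : (secL l x).length = l.length) :
    letterL l x = x ∧ ∀ p ∈ l, x ≠ p.1 ∧ x ≠ p.2 := by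
  induction l with
  | nil => simp [letterL]
  | cons p t ih =>
    by_cases hc : letterL t x = p.1 ∨ letterL t x = p.2
    · exfalso
      have := secL_length_le t x
      simp only [secL, if_pos hc, List.length_cons] at h
      omega
    · simp only [secL, if_neg hc, List.length_cons, Nat.add_right_cancel_iff] at h
      obtain ⟨hlet, hall⟩ := ih h
      rw [hlet] at hc
      push_neg at hc
      constructor
      · simp [letterL, hlet, tr3, hc.1, hc.2]
      · intro q hq
        rcases List.mem_cons.mp hq with rfl | hq
        · exact hc
        · exact hall q hq

lemma pair_unique' : ∀ (x a b c d : Fin 3), a < b → c < d →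
    x ≠ a → x ≠ b → x ≠ c → x ≠ d → a = c ∧ b = d := by decide

lemma pair_unique (x : Fin 3) (p q : Fin 3 × Fin 3) (hp : p.1 < p.2) (hq : q.1 < q.2)
    (h1 : x ≠ p.1) (h2 : x ≠ p.2) (h3 : x ≠ q.1) (h4 : x ≠ q.2) : p = q := by
  obtain ⟨e1, e2⟩ := pair_unique' x p.1 p.2 q.1 q.2 hp hq h1 h2 h3 h4
  exact Prod.ext e1 e2

lemma hGen_sq {k : ℕ} (i j : Fin k) : hGen i j * hGen i j = 1 :=
  Equiv.ext (hMove_involutive i j)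

lemma hGen_inv {k : ℕ} (i j : Fin k) : (hGen i j)⁻¹ = hGen i j := by
  rw [inv_eq_iff_mul_eq_one, hGen_sq]

lemma extract_pairs : ∀ l : List (Equiv.Perm (List (Fin 3))),
    (∀ s ∈ l, ∃ i j : Fin 3, i < j ∧ s = hGen i j) →
    ∃ L : List (Fin 3 × Fin 3), L.map genOf = l ∧ ∀ p ∈ L, p.1 < p.2 := by
  intro l
  induction l with
  | nil => exact fun _ => ⟨[], rfl, by simp⟩
  | cons s t ih =>
    intro h
    obtain ⟨i, j, hij, hs⟩ := h s (List.mem_cons_self)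
    obtain ⟨L, hL, hLlt⟩ := ih (fun a ha => h a (List.mem_cons_of_mem _ ha))
    refine ⟨(i, j) :: L, ?_, ?_⟩
    · simp [hL, genOf, hs]
    · intro p hp
      rcases List.mem_cons.mp hp with rfl | hp
      · exact hij
      · exact hLlt p hp

end Aux

/-- The Hanoi Towers group `H(3)` is contracting: there exists `N` such
that for every `g ∈ H(3)` of word length at least `N` (with respect to the generators
`a_{(01)}, a_{(02)}, a_{(12)}`) and every letter `x ∈ {0,1,2}`, the section `g_x` belongs
to `H(3)` and has word length strictly smaller than that of `g`. -/
theorem hanoi3_contracting :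
    ∃ N : ℕ, ∀ g ∈ HanoiGroup 3,
      N ≤ wordLength {g : Equiv.Perm (List (Fin 3)) | ∃ i j : Fin 3, i < j ∧ g = hGen i j} g →
      ∀ x : Fin 3, ∃ h ∈ HanoiGroup 3,
        (∀ w : List (Fin 3), h w = wordSection g x w) ∧
        wordLength {g : Equiv.Perm (List (Fin 3)) | ∃ i j : Fin 3, i < j ∧ g = hGen i j} h <
          wordLength {g : Equiv.Perm (List (Fin 3)) | ∃ i j : Fin 3, i < j ∧ g = hGen i j} g := by
  set S : Set (Equiv.Perm (List (Fin 3))) := {g | ∃ i j : Fin 3, i < j ∧ g = hGen i j} with hS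
  refine ⟨2, fun g hg hN x => ?_⟩
  -- g is a product of a list of generators
  have hg' : g ∈ Submonoid.closure (S ∪ S⁻¹) := by
    rw [← Subgroup.closure_toSubmonoid]; exact hg
  obtain ⟨l0, hl0mem, hl0prod⟩ := Submonoid.exists_list_of_mem_closure hg'
  have hl0S : ∀ s ∈ l0, s ∈ S := by
    intro s hs
    rcases hl0mem s hs with h | h
    · exact h
    · obtain ⟨i, j, hij, hsij⟩ := h
      have : s = hGen i j := by
        rw [← inv_inv s, hsij, hGen_inv]
      exact ⟨i, j, hij, this⟩
  -- the word-length set is nonempty, so `wordLength g` is attained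
  have hne : {m | ∃ l : List (Equiv.Perm (List (Fin 3))),
      l.length = m ∧ (∀ s ∈ l, s ∈ S) ∧ l.prod = g}.Nonempty :=
    ⟨l0.length, l0, rfl, hl0S, hl0prod⟩
  have hmem := Nat.sInf_mem hne
  set m := wordLength S g with hm
  obtain ⟨l, hlen, hlS, hlprod⟩ : ∃ l : List (Equiv.Perm (List (Fin 3))),
      l.length = m ∧ (∀ s ∈ l, s ∈ S) ∧ l.prod = g := hmem
  -- extract the list of index pairs
  obtain ⟨L, hLmap, hLlt⟩ := extract_pairs l (fun s hs => hlS s hs)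
  have hLlen : L.length = m := by rw [← hlen, ← hLmap, List.length_map]
  -- the candidate section
  set L' := secL L x with hL'
  refine ⟨(L'.map genOf).prod, ?_, ?_, ?_⟩
  · -- membership in the Hanoi group
    apply list_prod_mem
    intro c hc
    obtain ⟨p, hp, rfl⟩ := List.mem_map.mp hc
    exact Subgroup.subset_closure ⟨p.1, p.2, hLlt p (secL_subset L x p hp), rfl⟩
  · -- it computes the section
    intro w
    have := prod_section L x w
    rw [hLmap, hlprod] at this
    simp [wordSection, this, hL']
  · -- strict length decrease
    have hle : wordLength S ((L'.map genOf).prod) ≤ L'.length :=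
      Nat.sInf_le ⟨L'.map genOf, by simp, by
        intro s hs
        obtain ⟨p, hp, rfl⟩ := List.mem_map.mp hs
        exact ⟨p.1, p.2, hLlt p (secL_subset L x p hp), rfl⟩, rfl⟩
    have hlt : L'.length < m := by
      rcases lt_or_eq_of_le ((hLlen ▸ secL_length_le L x : L'.length ≤ m)) with h | h
      · exact h
      · -- all generators in the word miss `x`, hence they are all equal
        exfalso
        obtain ⟨-, hall⟩ := secL_eq_length L x (by rw [← hL'] at *; omega)
        -- L is nonempty (m ≥ 2)
        obtain ⟨p0, t, rfl⟩ : ∃ p0 t, L = p0 :: t := by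
          cases L with
          | nil => exfalso; simp at hLlen; omega
          | cons a b => exact ⟨a, b, rfl⟩
        have hLconst : ∀ q ∈ p0 :: t, q = p0 := by
          intro q hq
          obtain ⟨h1, h2⟩ := hall q hq
          obtain ⟨h3, h4⟩ := hall p0 (List.mem_cons_self)
          exact pair_unique x q p0 (hLlt q hq) (hLlt p0 (List.mem_cons_self)) h1 h2 h3 h4
        have hlrep : l = List.replicate m (genOf p0) := by
          have hallg : ∀ s ∈ l, s = genOf p0 := by
            intro s hs
            rw [← hLmap] at hs
            obtain ⟨q, hq, rfl⟩ := List.mem_map.mp hs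
            rw [hLconst q hq]
          rw [← hlen]
          exact List.eq_replicate_of_mem hallg
        have hgpow : g = (genOf p0) ^ m := by
          rw [← hlprod, hlrep, List.prod_replicate]
        -- but then g has a shorter word: m - 2 copies of genOf p0
        have hsq : genOf p0 * genOf p0 = 1 := hGen_sq p0.1 p0.2
        have hpow : (genOf p0) ^ m = (genOf p0) ^ (m - 2) := by
          have h2 : m = (m - 2) + 2 := by omega
          conv_lhs => rw [h2]
          rw [pow_add, pow_two, hsq, mul_one]
        have hle2 : m ≤ m - 2 := by
          rw [hm]
          apply Nat.sInf_le
          refine ⟨List.replicate (m - 2) (genOf p0), by simp [hm], ?_, ?_⟩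
          · intro s hs
            rw [List.eq_of_mem_replicate hs]
            exact ⟨p0.1, p0.2, hLlt p0 (List.mem_cons_self), rfl⟩
          · rw [List.prod_replicate, ← hpow, ← hgpow]
        omega
    exact lt_of_le_of_lt hle hlt
end

section
/- For k = 3, the orbital Schreier graph Γ = Γ_{000…} of the Hanoi Towers group H(3) has polynomial growth of degree log₂3: there exist constants c₂ ≥ c₁ > 0 such that c₁·n^{log 3 / log 2} ≤ γ(n) ≤ c₂·n^{log 3 / log 2} for all n ≥ 1. -/
open Classical in
/-- The action of the generator `a_{(ij)}` on infinite words: it swaps `i` and `j` at the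
first position whose letter lies in `{i,j}` and leaves all other letters fixed (if no
letter lies in `{i,j}`, the word is fixed). -/
noncomputable def hMoveInf {k : ℕ} (i j : Fin k) (s : ℕ → Fin k) : ℕ → Fin k :=
  fun m =>
    if (s m = i ∨ s m = j) ∧ ∀ l < m, s l ≠ i ∧ s l ≠ j then Equiv.swap i j (s m) else s m

/-- The orbital Schreier graph structure on infinite words: `s` and `t` are adjacent iff
`s ≠ t` and some generator `a_{(ij)}` (with `i < j`) maps one to the other. -/
noncomputable def infGraph (k : ℕ) : SimpleGraph (ℕ → Fin k) where
  Adj s t := s ≠ t ∧ ∃ i j : Fin k, i < j ∧ (hMoveInf i j s = t ∨ hMoveInf i j t = s)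
  symm := by
    constructor
    rintro s t ⟨hst, i, j, hij, h⟩
    exact ⟨hst.symm, i, j, hij, h.symm⟩
  loopless := ⟨fun s h => h.1 rfl⟩

/-- `s` lies in the orbit of `ξ` under the group generated by the actions of the
generators `a_{(ij)}`, `i < j`, on infinite words (each generator is an involution, so the
orbit is the set of images of `ξ` under finite products of generators). -/
noncomputable def inOrbit {k : ℕ} (ξ s : ℕ → Fin k) : Prop :=
  ∃ l : List (Fin k × Fin k), (∀ p ∈ l, p.1 < p.2) ∧
    l.foldl (fun t p => hMoveInf p.1 p.2 t) ξ = s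

/-- `γ(n)`: the number of vertices of the orbital Schreier graph `Γ_ξ` (whose vertex set
is the orbit of `ξ`) at graph distance at most `n` from `ξ`. -/
noncomputable def orbitalGrowth {k : ℕ} (ξ : ℕ → Fin k) (n : ℕ) : ℕ :=
  {s | inOrbit ξ s ∧ (infGraph k).dist ξ s ≤ n}.ncard

/-!
Read a word `s` as a position of the Towers of Hanoi with infinitely many disks, `s r` being the
peg of the disk of size `r`: the generator `a_(ij)` moves the smallest disk lying on pegs `i`, `j`
from one of them to the other. Disk `l` can only move when the `l` smaller disks all sit on the
third peg, so, as in the classical puzzle, shifting a tower of `l` disks to another peg takes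
exactly `2 ^ l - 1` moves. Hence the ball of radius `n` about `000…` contains every word supported
on the first `⌊log₂ (n + 1)⌋` letters and only words supported on the first `⌊log₂ n⌋ + 1`
letters, which gives `γ(n) ≍ 3 ^ log₂ n = n ^ (log 3 / log 2)`.
-/

namespace HanoiTowers

section Moves

variable {k : ℕ} {i j : Fin k} {s : ℕ → Fin k} {m : ℕ}

def IsFirstHit (i j : Fin k) (s : ℕ → Fin k) (m : ℕ) : Prop :=
  (s m = i ∨ s m = j) ∧ ∀ l < m, s l ≠ i ∧ s l ≠ j

lemma hMoveInf_apply_of_isFirstHit (h : IsFirstHit i j s m) :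
    hMoveInf i j s m = Equiv.swap i j (s m) :=
  if_pos h

lemma hMoveInf_apply_of_not_isFirstHit (h : ¬ IsFirstHit i j s m) : hMoveInf i j s m = s m :=
  if_neg h

lemma isFirstHit_of_hMoveInf_apply_ne (h : hMoveInf i j s m ≠ s m) : IsFirstHit i j s m :=
  not_not.mp (mt hMoveInf_apply_of_not_isFirstHit h)

lemma ne_of_hMoveInf_apply_ne (h : hMoveInf i j s m ≠ s m) : i ≠ j := by
  rintro rfl
  rw [hMoveInf_apply_of_isFirstHit (isFirstHit_of_hMoveInf_apply_ne h)] at h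
  simp at h

lemma hMoveInf_apply_eq_or_eq_iff :
    (hMoveInf i j s m = i ∨ hMoveInf i j s m = j) ↔ (s m = i ∨ s m = j) := by
  by_cases h : IsFirstHit i j s m
  · rw [hMoveInf_apply_of_isFirstHit h, Equiv.swap_apply_eq_iff, Equiv.swap_apply_eq_iff,
      Equiv.swap_apply_left, Equiv.swap_apply_right, or_comm]
  · rw [hMoveInf_apply_of_not_isFirstHit h]

lemma isFirstHit_hMoveInf_iff : IsFirstHit i j (hMoveInf i j s) m ↔ IsFirstHit i j s m := by
  simp only [IsFirstHit, ← not_or, hMoveInf_apply_eq_or_eq_iff]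

@[simp]
lemma hMoveInf_hMoveInf (i j : Fin k) (s : ℕ → Fin k) : hMoveInf i j (hMoveInf i j s) = s := by
  funext m
  by_cases h : IsFirstHit i j s m
  · rw [hMoveInf_apply_of_isFirstHit (isFirstHit_hMoveInf_iff.mpr h),
      hMoveInf_apply_of_isFirstHit h, Equiv.swap_apply_self]
  · rw [hMoveInf_apply_of_not_isFirstHit (mt isFirstHit_hMoveInf_iff.mp h),
      hMoveInf_apply_of_not_isFirstHit h]

lemma hMoveInf_comm (i j : Fin k) (s : ℕ → Fin k) : hMoveInf j i s = hMoveInf i j s := by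
  funext m
  have hiff : IsFirstHit j i s m ↔ IsFirstHit i j s m := by
    simp only [IsFirstHit, or_comm, and_comm]
  by_cases h : IsFirstHit i j s m
  · rw [hMoveInf_apply_of_isFirstHit (hiff.mpr h), hMoveInf_apply_of_isFirstHit h,
      Equiv.swap_comm]
  · rw [hMoveInf_apply_of_not_isFirstHit (mt hiff.mp h), hMoveInf_apply_of_not_isFirstHit h]

lemma IsFirstHit.hMoveInf_eq_update (h : IsFirstHit i j s m) :
    hMoveInf i j s = Function.update s m (Equiv.swap i j (s m)) := by
  funext r
  rcases eq_or_ne r m with rfl | hrm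
  · rw [hMoveInf_apply_of_isFirstHit h, Function.update_self]
  · rw [Function.update_of_ne hrm]
    refine hMoveInf_apply_of_not_isFirstHit fun hr => ?_
    rcases hrm.lt_or_gt with hlt | hgt
    · exact (h.2 r hlt).elim fun hi hj => hr.1.elim hi hj
    · exact (hr.2 m hgt).elim fun hi hj => h.1.elim hi hj

noncomputable def applyMoves (L : List (Fin k × Fin k)) (u : ℕ → Fin k) : ℕ → Fin k :=
  L.foldl (fun t q => hMoveInf q.1 q.2 t) u

@[simp]
lemma applyMoves_nil (u : ℕ → Fin k) : applyMoves [] u = u := rfl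

@[simp]
lemma applyMoves_cons (q : Fin k × Fin k) (L : List (Fin k × Fin k)) (u : ℕ → Fin k) :
    applyMoves (q :: L) u = applyMoves L (hMoveInf q.1 q.2 u) := rfl

@[simp]
lemma applyMoves_append (L₁ L₂ : List (Fin k × Fin k)) (u : ℕ → Fin k) :
    applyMoves (L₁ ++ L₂) u = applyMoves L₂ (applyMoves L₁ u) :=
  List.foldl_append

@[simp]
lemma applyMoves_reverse_applyMoves (L : List (Fin k × Fin k)) (u : ℕ → Fin k) :
    applyMoves L.reverse (applyMoves L u) = u := by
  induction L generalizing u with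
  | nil => rfl
  | cons q L ih => simp [ih]

lemma exists_split_first_change {L : List (Fin k × Fin k)} {u : ℕ → Fin k} {l : ℕ}
    (h : applyMoves L u l ≠ u l) :
    ∃ L₁ q L₂, L = L₁ ++ [q] ++ L₂ ∧ applyMoves L₁ u l = u l ∧
      hMoveInf q.1 q.2 (applyMoves L₁ u) l ≠ applyMoves L₁ u l := by
  induction L generalizing u with
  | nil => exact absurd rfl h
  | cons q L ih =>
    by_cases hq : hMoveInf q.1 q.2 u l = u l
    · obtain ⟨L₁, q', L₂, rfl, hL₁, hchange⟩ :=
        ih (u := hMoveInf q.1 q.2 u) (by simpa [hq] using h)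
      exact ⟨q :: L₁, q', L₂, rfl, hL₁.trans hq, hchange⟩
    · exact ⟨[], q, L, rfl, rfl, hq⟩

end Moves

section Graph

open SimpleGraph

variable {k : ℕ}

lemma infGraph_adj_hMoveInf {i j : Fin k} {s : ℕ → Fin k} (hij : i ≠ j)
    (h : hMoveInf i j s ≠ s) : (infGraph k).Adj s (hMoveInf i j s) := by
  refine ⟨Ne.symm h, ?_⟩
  rcases hij.lt_or_gt with hlt | hgt
  · exact ⟨i, j, hlt, Or.inl rfl⟩
  · exact ⟨j, i, hgt, Or.inl (hMoveInf_comm i j s)⟩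

lemma reachable_hMoveInf (i j : Fin k) (s : ℕ → Fin k) :
    (infGraph k).Reachable s (hMoveInf i j s) := by
  by_cases h : hMoveInf i j s = s
  · rw [h]
  · obtain ⟨m, hm⟩ := Function.ne_iff.mp h
    exact (infGraph_adj_hMoveInf (ne_of_hMoveInf_apply_ne hm) h).reachable

lemma reachable_applyMoves (L : List (Fin k × Fin k)) (u : ℕ → Fin k) :
    (infGraph k).Reachable u (applyMoves L u) := by
  induction L generalizing u with
  | nil => rfl
  | cons q L ih => exact (reachable_hMoveInf q.1 q.2 u).trans (ih _)

lemma exists_applyMoves_of_walk {u v : ℕ → Fin k} (w : (infGraph k).Walk u v) :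
    ∃ L : List (Fin k × Fin k), (∀ q ∈ L, q.1 < q.2) ∧ L.length = w.length ∧
      applyMoves L u = v := by
  induction w with
  | nil => exact ⟨[], by simp, rfl, rfl⟩
  | @cons u x v hadj w ih =>
    obtain ⟨-, i, j, hij, hmove⟩ := hadj
    obtain ⟨L, hL, hlen, rfl⟩ := ih
    have hx : hMoveInf i j u = x := hmove.elim id fun h => by rw [← h, hMoveInf_hMoveInf]
    refine ⟨(i, j) :: L, ?_, by rw [List.length_cons, hlen]; rfl, by simp [hx]⟩
    rintro q (_ | ⟨_, hq⟩)
    exacts [hij, hL q hq]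

lemma inOrbit_iff_reachable {u v : ℕ → Fin k} : inOrbit u v ↔ (infGraph k).Reachable u v := by
  constructor
  · rintro ⟨L, -, rfl⟩
    exact reachable_applyMoves L u
  · rintro ⟨w⟩
    obtain ⟨L, hL, -, hv⟩ := exists_applyMoves_of_walk w
    exact ⟨L, hL, hv⟩

lemma inOrbit_and_dist_le_iff {u v : ℕ → Fin k} {n : ℕ} :
    inOrbit u v ∧ (infGraph k).dist u v ≤ n ↔ ∃ w : (infGraph k).Walk u v, w.length ≤ n := by
  rw [inOrbit_iff_reachable]
  constructor
  · rintro ⟨hr, hn⟩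
    obtain ⟨w, hw⟩ := hr.exists_walk_length_eq_dist
    exact ⟨w, hw ▸ hn⟩
  · rintro ⟨w, hw⟩
    exact ⟨⟨w⟩, (dist_le w).trans hw⟩

end Graph

section Support

def wordsBelow (k m : ℕ) [NeZero k] : Set (ℕ → Fin k) := {s | ∀ r, m ≤ r → s r = 0}

variable {k : ℕ} [NeZero k]

def extendByZero {m : ℕ} (f : Fin m → Fin k) : ℕ → Fin k :=
  fun r => if h : r < m then f ⟨r, h⟩ else 0

lemma extendByZero_injective (m : ℕ) :
    Function.Injective (extendByZero (k := k) (m := m)) := by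
  intro f g h
  funext r
  simpa [extendByZero] using congr_fun h r

lemma wordsBelow_eq_range (m : ℕ) : wordsBelow k m = Set.range (extendByZero (m := m)) := by
  ext s
  constructor
  · intro hs
    refine ⟨fun r => s r, funext fun r => ?_⟩
    by_cases hr : r < m
    · simp [extendByZero, hr]
    · simp [extendByZero, hr, hs r (not_lt.mp hr)]
  · rintro ⟨f, rfl⟩ r hr
    simp [extendByZero, not_lt.mpr hr]

lemma wordsBelow_finite (m : ℕ) : (wordsBelow k m).Finite := by
  rw [wordsBelow_eq_range]
  exact Set.finite_range _

lemma ncard_wordsBelow (m : ℕ) : (wordsBelow k m).ncard = k ^ m := by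
  rw [wordsBelow_eq_range, ← Set.image_univ, Set.ncard_image_of_injective _
    (extendByZero_injective m), Set.ncard_univ, Nat.card_eq_fintype_card, Fintype.card_fun,
    Fintype.card_fin, Fintype.card_fin]

end Support

section ThreePegs

open SimpleGraph

-- `0 + 1 + 2 = 0` in `Fin 3`.
def third (i j : Fin 3) : Fin 3 := -(i + j)

lemma eq_third : ∀ {i j x : Fin 3}, i ≠ j → x ≠ i → x ≠ j → x = third i j := by decide

lemma third_ne_left : ∀ {i j : Fin 3}, i ≠ j → third i j ≠ i := by decide

lemma third_ne_right : ∀ {i j : Fin 3}, i ≠ j → third i j ≠ j := by decide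

lemma IsFirstHit.eq_third {i j : Fin 3} {s : ℕ → Fin 3} {l : ℕ} (h : IsFirstHit i j s l)
    (hij : i ≠ j) : ∀ r < l, s r = third i j :=
  fun r hr => HanoiTowers.eq_third hij (h.2 r hr).1 (h.2 r hr).2

lemma IsFirstHit.third_ne {i j : Fin 3} {s : ℕ → Fin 3} {l : ℕ} (h : IsFirstHit i j s l)
    (hij : i ≠ j) : third i j ≠ s l := by
  rcases h.1 with h | h <;> rw [h]
  exacts [third_ne_left hij, third_ne_right hij]

/-- When disk `l` first leaves peg `a`, the smaller disks all sit on the third peg `c`. -/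
lemma exists_split_first_move {l : ℕ} {L : List (Fin 3 × Fin 3)} {u : ℕ → Fin 3} {a : Fin 3}
    (hu : ∀ r ≤ l, u r = a) (hL : applyMoves L u l ≠ a) :
    ∃ L₁ q L₂ c, L = L₁ ++ [q] ++ L₂ ∧ c ≠ a ∧ (∀ r < l, applyMoves L₁ u r = c) ∧
      (∀ r < l, applyMoves (L₁ ++ [q]) u r = c) ∧ c ≠ applyMoves (L₁ ++ [q]) u l := by
  obtain ⟨L₁, q, L₂, rfl, hl, hchange⟩ := exists_split_first_change (hu l le_rfl ▸ hL)
  have hfirst := isFirstHit_of_hMoveInf_apply_ne hchange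
  have hq := ne_of_hMoveInf_apply_ne hchange
  simp only [applyMoves_append, applyMoves_cons, applyMoves_nil]
  refine ⟨L₁, q, L₂, third q.1 q.2, rfl, ?_, hfirst.eq_third hq, fun r hr => ?_, ?_⟩
  · rw [← hu l le_rfl, ← hl]
    exact hfirst.third_ne hq
  · rw [hfirst.hMoveInf_eq_update, Function.update_of_ne hr.ne, hfirst.eq_third hq r hr]
  · exact (isFirstHit_hMoveInf_iff.mpr hfirst).third_ne hq

theorem two_pow_le_length_add_one {l : ℕ} {L : List (Fin 3 × Fin 3)} {u : ℕ → Fin 3}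
    {a b : Fin 3} (hab : a ≠ b) (hu : ∀ r < l, u r = a) (hv : ∀ r < l, applyMoves L u r = b) :
    2 ^ l ≤ L.length + 1 := by
  induction l generalizing L u a b with
  | zero => simp
  | succ l ih =>
    obtain ⟨L₁, q, L₂, c, rfl, hca, hL₁, hw, hcw⟩ :=
      exists_split_first_move (fun r hr => hu r (Nat.lt_succ_of_le hr))
        (by rw [hv l l.lt_succ_self]; exact hab.symm)
    have hwv : ∀ r ≤ l, applyMoves L₂ (applyMoves (L₁ ++ [q]) u) r = b := fun r hr => by
      rw [← applyMoves_append]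
      exact hv r (Nat.lt_succ_of_le hr)
    have h₁ : 2 ^ l ≤ L₁.length + 1 := ih hca.symm (fun r hr => hu r (by omega)) hL₁
    -- Either disk `l` already sits on `b`, so `L₂` moves the small disks from `c ≠ b` to `b`, or
    -- it moves again, and the first move argument applies to `L₂` run backwards from the end.
    have h₂ : 2 ^ l ≤ L₂.length + 1 := by
      by_cases hstay :
          applyMoves L₂ (applyMoves (L₁ ++ [q]) u) l = applyMoves (L₁ ++ [q]) u l
      · refine ih (fun hcb => hcw ?_) hw (fun r hr => hwv r hr.le)
        rw [hcb, ← hwv l le_rfl, hstay]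
      · obtain ⟨N₁, q', N₂, c', hN, hc'b, hN₁, -, -⟩ :=
          exists_split_first_move (L := L₂.reverse) hwv
            (by rw [applyMoves_reverse_applyMoves, ← hwv l le_rfl]; exact Ne.symm hstay)
        have hlen : L₂.length = N₁.length + 1 + N₂.length := by
          rw [← List.length_reverse, hN]
          simp only [List.length_append, List.length_singleton]
        have := ih hc'b.symm (fun r hr => hwv r hr.le) hN₁
        omega
    simp only [List.length_append, List.length_singleton, pow_succ]
    omega

lemma applyMoves_const_of_length_lt {m : ℕ} {L : List (Fin 3 × Fin 3)}
    (hL : L.length < 2 ^ m) (a : Fin 3) {r : ℕ} (hr : m ≤ r) :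
    applyMoves L (fun _ => a) r = a := by
  by_contra h
  obtain ⟨L₁, q, L₂, c, rfl, hca, hL₁, -, -⟩ := exists_split_first_move (fun _ _ => rfl) h
  have := two_pow_le_length_add_one (l := m) hca.symm (fun _ _ => rfl)
    fun r' hr' => hL₁ r' (by omega)
  simp only [List.length_append, List.length_singleton] at hL
  omega

theorem exists_walk_length_lt (m : ℕ) {p : Fin 3} {u v : ℕ → Fin 3} (hu : ∀ r < m, u r = p)
    (huv : ∀ r, m ≤ r → u r = v r) : ∃ w : (infGraph 3).Walk u v, w.length < 2 ^ m := by
  induction m generalizing p u v with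
  | zero =>
    obtain rfl : u = v := funext fun r => huv r r.zero_le
    exact ⟨Walk.nil, Nat.one_pos⟩
  | succ m ih =>
    by_cases hvm : v m = p
    · obtain ⟨w, hw⟩ := ih (fun r hr => hu r (by omega)) fun r hr =>
        (eq_or_lt_of_le hr).elim (fun h => h ▸ (hu m m.lt_succ_self).trans hvm.symm)
          fun h => huv r h
      exact ⟨w, hw.trans (Nat.pow_lt_pow_succ one_lt_two)⟩
    · have hpc : p ≠ v m := Ne.symm hvm
      set d := third p (v m)
      -- Park the `m` small disks on `d`, move disk `m` from `p` to `v m`, then rebuild on top.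
      obtain ⟨u', hu'⟩ : ∃ u' : ℕ → Fin 3, ∀ r, u' r = if r < m then d else u r :=
        ⟨_, fun _ => rfl⟩
      have hu'm : u' m = p := by simp [hu', hu m m.lt_succ_self]
      obtain ⟨w₁, hw₁⟩ := ih (v := u') (fun r hr => hu r (by omega))
        fun r hr => by simp [hu', not_lt.mpr hr]
      have hfirst : IsFirstHit p (v m) u' m :=
        ⟨Or.inl hu'm, fun r hr => by simp [hu', hr, d, third_ne_left hpc, third_ne_right hpc]⟩
      have hmove : hMoveInf p (v m) u' = Function.update u' m (v m) := by
        rw [hfirst.hMoveInf_eq_update, hu'm, Equiv.swap_apply_left]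
      have hadj : (infGraph 3).Adj u' (hMoveInf p (v m) u') :=
        infGraph_adj_hMoveInf hpc fun h => hpc <| by
          rw [← hu'm, ← h, hmove, Function.update_self]
      obtain ⟨w₂, hw₂⟩ := ih (p := d) (u := hMoveInf p (v m) u')
        (fun r hr => by simp [hmove, hr.ne, hu', hr]) fun r hr => by
          rcases eq_or_lt_of_le hr with rfl | hlt
          · rw [hmove, Function.update_self]
          · simp [hmove, hlt.ne', hu', not_lt.mpr hlt.le, huv r hlt]
      refine ⟨w₁.append (Walk.cons hadj w₂), ?_⟩
      rw [Walk.length_append, Walk.length_cons, pow_succ]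
      omega

lemma wordsBelow_subset_ball {m n : ℕ} (h : 2 ^ m ≤ n + 1) :
    wordsBelow 3 m ⊆ {s | inOrbit (fun _ => 0) s ∧ (infGraph 3).dist (fun _ => 0) s ≤ n} := by
  intro s hs
  obtain ⟨w, hw⟩ := exists_walk_length_lt m (fun _ _ => rfl) fun r hr => (hs r hr).symm
  exact inOrbit_and_dist_le_iff.mpr ⟨w, by omega⟩

lemma ball_subset_wordsBelow {m n : ℕ} (h : n < 2 ^ m) :
    {s | inOrbit (fun _ => 0) s ∧ (infGraph 3).dist (fun _ => 0) s ≤ n} ⊆ wordsBelow 3 m := by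
  intro s hs r hr
  obtain ⟨w, hw⟩ := inOrbit_and_dist_le_iff.mp hs
  obtain ⟨L, -, hlen, rfl⟩ := exists_applyMoves_of_walk w
  exact applyMoves_const_of_length_lt (by omega) 0 hr

lemma orbitalGrowth_le_three_pow (n : ℕ) :
    orbitalGrowth (fun _ => (0 : Fin 3)) n ≤ 3 ^ (Nat.log 2 n + 1) := by
  rw [← ncard_wordsBelow]
  exact Set.ncard_le_ncard (ball_subset_wordsBelow (Nat.lt_pow_succ_log_self one_lt_two n))
    (wordsBelow_finite _)

lemma three_pow_le_orbitalGrowth (n : ℕ) :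
    3 ^ Nat.log 2 (n + 1) ≤ orbitalGrowth (fun _ => (0 : Fin 3)) n := by
  rw [← ncard_wordsBelow]
  exact Set.ncard_le_ncard (wordsBelow_subset_ball (Nat.pow_log_le_self 2 n.succ_ne_zero))
    ((wordsBelow_finite _).subset
      (ball_subset_wordsBelow (Nat.lt_pow_succ_log_self one_lt_two n)))

end ThreePegs

lemma two_rpow_log_three_div_log_two : (2 : ℝ) ^ (Real.log 3 / Real.log 2) = 3 :=
  Real.rpow_logb (by norm_num) (by norm_num) (by norm_num)

lemma two_pow_rpow_log_three_div_log_two (m : ℕ) :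
    ((2 : ℝ) ^ m) ^ (Real.log 3 / Real.log 2) = 3 ^ m := by
  rw [← Real.rpow_pow_comm zero_le_two, two_rpow_log_three_div_log_two]

lemma rpow_log_three_div_log_two_le {x y : ℝ} (hx : 0 ≤ x) (hxy : x ≤ 2 * y) :
    x ^ (Real.log 3 / Real.log 2) ≤ 3 * y ^ (Real.log 3 / Real.log 2) :=
  calc x ^ (Real.log 3 / Real.log 2) ≤ (2 * y) ^ (Real.log 3 / Real.log 2) :=
        Real.rpow_le_rpow hx hxy (by positivity)
    _ = 3 * y ^ (Real.log 3 / Real.log 2) := by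
        rw [Real.mul_rpow zero_le_two (by linarith), two_rpow_log_three_div_log_two]

end HanoiTowers

open HanoiTowers

/-- For `k = 3`, the orbital Schreier graph `Γ_{000…}` of `H(3)` has
polynomial growth of degree `log 3 / log 2`: there are constants `c₂ ≥ c₁ > 0` with
`c₁ · n^(log 3 / log 2) ≤ γ(n) ≤ c₂ · n^(log 3 / log 2)` for all `n ≥ 1`. -/
theorem hanoi3_orbital_growth_polynomial :
    ∃ c₁ c₂ : ℝ, 0 < c₁ ∧ c₁ ≤ c₂ ∧
      ∀ n : ℕ, 1 ≤ n →
        c₁ * (n : ℝ) ^ (Real.log 3 / Real.log 2) ≤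
            (orbitalGrowth (fun _ => (0 : Fin 3)) n : ℝ) ∧
        (orbitalGrowth (fun _ => (0 : Fin 3)) n : ℝ) ≤
            c₂ * (n : ℝ) ^ (Real.log 3 / Real.log 2) := by
  refine ⟨1 / 3, 3, by norm_num, by norm_num, fun n hn => ⟨?_, ?_⟩⟩
  · have hnm : n ≤ 2 * 2 ^ Nat.log 2 (n + 1) := by
      have := Nat.lt_pow_succ_log_self one_lt_two (n + 1)
      rw [pow_succ] at this
      omega
    calc 1 / 3 * (n : ℝ) ^ (Real.log 3 / Real.log 2)
        ≤ 1 / 3 * (3 * ((2 : ℝ) ^ Nat.log 2 (n + 1)) ^ (Real.log 3 / Real.log 2)) := by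
          gcongr
          exact rpow_log_three_div_log_two_le n.cast_nonneg (by exact_mod_cast hnm)
      _ = 3 ^ Nat.log 2 (n + 1) := by rw [two_pow_rpow_log_three_div_log_two]; ring
      _ ≤ orbitalGrowth (fun _ => (0 : Fin 3)) n := by
          exact_mod_cast three_pow_le_orbitalGrowth n
  · have hmn : 2 ^ (Nat.log 2 n + 1) ≤ 2 * n := by
      have := Nat.pow_log_le_self 2 (Nat.one_le_iff_ne_zero.mp hn)
      rw [pow_succ]
      omega
    calc (orbitalGrowth (fun _ => (0 : Fin 3)) n : ℝ)
        ≤ 3 ^ (Nat.log 2 n + 1) := by exact_mod_cast orbitalGrowth_le_three_pow n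
      _ = ((2 : ℝ) ^ (Nat.log 2 n + 1)) ^ (Real.log 3 / Real.log 2) :=
          (two_pow_rpow_log_three_div_log_two _).symm
      _ ≤ 3 * (n : ℝ) ^ (Real.log 3 / Real.log 2) :=
          rpow_log_three_div_log_two_le (by positivity) (by exact_mod_cast hmn)
end

section
/- For the Hanoi Towers group H(3) and every n ≥ 1, the set of real eigenvalues of the adjacency matrix T_n of the level-n Schreier graph equals {3} ∪ ⋃_{i=0}^{n−1} f^{−i}({0}) ∪ ⋃_{j=0}^{n−2} f^{−j}({−2}), where f(x) = x² − x − 3 and f^{−m}(B) denotes the preimage of B ⊆ ℝ under the m-th iterate of f. -/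
/-- The action of the generator `a_{(ij)}` on words of length `n`, viewed as functions
`Fin n → Fin k` (via the word `List.ofFn u`; the action preserves length). -/
def levelMove {k n : ℕ} (i j : Fin k) (u : Fin n → Fin k) : Fin n → Fin k :=
  fun m => (hMove i j (List.ofFn u)).get
    (Fin.cast (by rw [hMove_length, List.length_ofFn]) m)

/-- The level-`n` Schreier graph `Γ_n` of `H(k)`: vertices are the `k^n` words of length
`n` over `{0, …, k-1}`, and `u`, `v` are adjacent iff `u ≠ v` and some generator
`a_{(ij)}` (with `i < j`) maps one to the other. -/
def levelGraph (k n : ℕ) : SimpleGraph (Fin n → Fin k) where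
  Adj u v := u ≠ v ∧ ∃ i j : Fin k, i < j ∧ (levelMove i j u = v ∨ levelMove i j v = u)
  symm := by
    constructor
    rintro u v ⟨huv, i, j, hij, h⟩
    exact ⟨huv.symm, i, j, hij, h.symm⟩
  loopless := ⟨fun u h => h.1 rfl⟩

open Classical in
/-- The adjacency matrix `T_n = Σ_{i<j} ρ_n(a_{(ij)})` of the level-`n` Schreier graph of
`H(k)`: the `(u,v)` entry counts the generators `a_{(ij)}`, `i < j`, with
`a_{(ij)}(v) = u` (each summand is the permutation matrix of `ρ_n(a_{(ij)})`). -/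
noncomputable def adjMat (k n : ℕ) : Matrix (Fin n → Fin k) (Fin n → Fin k) ℝ :=
  Matrix.of fun u v =>
    ((Finset.univ.filter
      fun p : Fin k × Fin k => p.1 < p.2 ∧ levelMove p.1 p.2 v = u).card : ℝ)

/-- The polynomial `f(x) = x² - x - 3`, as a map `ℝ → ℝ`. -/
def hanoiPoly : ℝ → ℝ := fun x => x ^ 2 - x - 3

/-!
Decimation. Write a function `x` on words of length `n + 1` through its restrictions
`x_k(t) = x(kt)` to the three subtrees, and let `s = x₀ + x₁ + x₂`. Of the three generators,
the one not moving the letter `k` (call it `σ_k`) acts inside the subtree `k`, while the other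
two swap `k` with the remaining letters; hence `T x = λ x` says exactly
`x_k ∘ σ_k = (λ + 1) x_k - s` for every `k`. Applying this twice along the involution `σ_k`
gives `((λ + 1)² - 1) x_k = (λ + 1) s + s ∘ σ_k`, and summing over `k` shows
`T s = f(λ) s` one level down. Conversely `x_k = (λ + 1) s + s ∘ σ_k` lifts an
`f(λ)`-eigenfunction `s`.
So away from `λ ∈ {0, -2}`, where `(λ + 1)² = 1`, the level-`(n+1)` eigenvalues are the
`f`-preimages of the level-`n` ones. The exceptional values are settled by explicit
eigenfunctions (`0` from level `1` on, `-2` from level `2` on; at level `1` the relation above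
forces `x = 0` for `λ = -2`), and the recursion starts from the spectrum `{3}` of the empty word.
-/

open scoped Matrix

theorem List.ofFn_levelMove {k n : ℕ} (i j : Fin k) (u : Fin n → Fin k) :
    List.ofFn (levelMove i j u) = hMove i j (List.ofFn u) :=
  List.ext_get (by simp [hMove_length]) fun _ _ _ => by simp [levelMove]

theorem levelMove_involutive {k n : ℕ} (i j : Fin k) :
    Function.Involutive (levelMove i j : (Fin n → Fin k) → Fin n → Fin k) := fun u =>
  List.ofFn_injective <| by rw [List.ofFn_levelMove, List.ofFn_levelMove, hMove_involutive]

theorem levelMove_cons {k n : ℕ} (i j x : Fin k) (t : Fin n → Fin k) :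
    levelMove i j (Fin.cons x t) =
      if x = i then Fin.cons j t else if x = j then Fin.cons i t
        else Fin.cons x (levelMove i j t) := by
  apply List.ofFn_injective
  rw [List.ofFn_levelMove, List.ofFn_cons]
  split_ifs <;> simp_all [hMove, List.ofFn_levelMove]

open Finset in
theorem adjMat_mulVec_apply {k n : ℕ} (x : (Fin n → Fin k) → ℝ) (u : Fin n → Fin k) :
    (adjMat k n *ᵥ x) u =
      ∑ p ∈ univ.filter (fun p : Fin k × Fin k => p.1 < p.2), x (levelMove p.1 p.2 u) := by
  simp only [Matrix.mulVec, dotProduct, adjMat, Matrix.of_apply, card_filter, Nat.cast_sum,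
    Nat.cast_ite, Nat.cast_one, Nat.cast_zero, sum_mul, ite_mul, one_mul, zero_mul]
  rw [sum_comm, sum_filter]
  refine sum_congr rfl fun p _ => ?_
  split_ifs with hp
  · simp [hp, (levelMove_involutive _ _).eq_iff]
  · simp [hp]

theorem Matrix.mem_spectrum_iff_exists_mulVec_eq_smul {K ι : Type*} [Field K] [Fintype ι]
    [DecidableEq ι] (A : Matrix ι ι K) (μ : K) :
    μ ∈ spectrum K A ↔ ∃ x ≠ 0, A *ᵥ x = μ • x := by
  rw [← Matrix.spectrum_toLin', ← Module.End.hasEigenvalue_iff_mem_spectrum,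
    Module.End.hasEigenvalue_iff, Submodule.ne_bot_iff]
  simp [and_comm]

namespace Hanoi3

abbrev Word (n : ℕ) := Fin n → Fin 3

/-- The generator `a_{(ij)}` with `{h, i, j} = {0, 1, 2}`, so `a = avoidGen 2`, `b = avoidGen 1`
and `c = avoidGen 0`. -/
def avoidGen {n : ℕ} (h : Fin 3) : Word n → Word n :=
  ![levelMove 1 2, levelMove 0 2, levelMove 0 1] h

theorem avoidGen_involutive {n : ℕ} (h : Fin 3) :
    Function.Involutive (avoidGen (n := n) h) := by
  fin_cases h <;> exact levelMove_involutive _ _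

theorem adjMat_three_mulVec_apply {n : ℕ} (x : Word n → ℝ) (u : Word n) :
    (adjMat 3 n *ᵥ x) u = ∑ h, x (avoidGen h u) := by
  have hpairs : Finset.univ.filter (fun p : Fin 3 × Fin 3 => p.1 < p.2) =
      {(0, 1), (0, 2), (1, 2)} := by decide
  rw [adjMat_mulVec_apply, hpairs, Fin.sum_univ_three]
  simp [avoidGen]
  ring

def IsEigenfunction {n : ℕ} (μ : ℝ) (x : Word n → ℝ) : Prop :=
  ∀ u, ∑ h, x (avoidGen h u) = μ * x u

def IsEigenvalue (n : ℕ) (μ : ℝ) : Prop :=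
  ∃ x : Word n → ℝ, x ≠ 0 ∧ IsEigenfunction μ x

theorem mem_spectrum_adjMat_three_iff {n : ℕ} {μ : ℝ} :
    μ ∈ spectrum ℝ (adjMat 3 n) ↔ IsEigenvalue n μ := by
  simp only [Matrix.mem_spectrum_iff_exists_mulVec_eq_smul, funext_iff,
    adjMat_three_mulVec_apply, Pi.smul_apply, smul_eq_mul, IsEigenvalue, IsEigenfunction]

theorem sum_avoidGen_cons {n : ℕ} (x : Word (n + 1) → ℝ) (k : Fin 3) (t : Word n) :
    ∑ h, x (avoidGen h (Fin.cons k t)) =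
      x (Fin.cons k (avoidGen k t)) + ∑ h, x (Fin.cons h t) - x (Fin.cons k t) := by
  fin_cases k <;> simp [avoidGen, levelMove_cons, Fin.sum_univ_three] <;> ring

theorem isEigenfunction_succ_iff {n : ℕ} {μ : ℝ} {x : Word (n + 1) → ℝ} :
    IsEigenfunction μ x ↔ ∀ k t,
      x (Fin.cons k (avoidGen k t)) = (μ + 1) * x (Fin.cons k t) - ∑ h, x (Fin.cons h t) := by
  rw [IsEigenfunction, Fin.forall_fin_succ_pi]
  refine forall₂_congr fun k t => ?_
  rw [sum_avoidGen_cons]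
  constructor <;> intro h <;> linarith

theorem sq_add_one_sub_one_ne_zero {μ : ℝ} (h0 : μ ≠ 0) (h2 : μ ≠ -2) :
    (μ + 1) ^ 2 - 1 ≠ 0 := by
  have : μ + 2 ≠ 0 := fun h => h2 (by linarith)
  rw [show (μ + 1) ^ 2 - 1 = μ * (μ + 2) by ring]
  exact mul_ne_zero h0 this

theorem IsEigenvalue.of_succ {n : ℕ} {μ : ℝ} (h0 : μ ≠ 0) (h2 : μ ≠ -2)
    (hμ : IsEigenvalue (n + 1) μ) : IsEigenvalue n (hanoiPoly μ) := by
  obtain ⟨x, hx0, hx⟩ := hμ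
  rw [isEigenfunction_succ_iff] at hx
  set s : Word n → ℝ := fun t => ∑ h, x (Fin.cons h t) with hs
  have hsolve : ∀ k t,
      ((μ + 1) ^ 2 - 1) * x (Fin.cons k t) = (μ + 1) * s t + s (avoidGen k t) := by
    intro k t
    have hσ := hx k (avoidGen k t)
    rw [avoidGen_involutive k t] at hσ
    linear_combination -hσ - (μ + 1) * hx k t
  refine ⟨s, ?_, fun t => ?_⟩
  · contrapose! hx0
    rw [funext_iff, Fin.forall_fin_succ_pi]
    intro k t
    simpa [hx0, sq_add_one_sub_one_ne_zero h0 h2] using hsolve k t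
  · have hsum := Finset.sum_congr rfl fun k (_ : k ∈ Finset.univ) => hsolve k t
    rw [← Finset.mul_sum, Finset.sum_add_distrib, Finset.sum_const, Finset.card_univ,
      Fintype.card_fin, nsmul_eq_mul] at hsum
    unfold hanoiPoly
    linear_combination -hsum

theorem IsEigenvalue.succ {n : ℕ} {μ : ℝ} (h0 : μ ≠ 0) (h2 : μ ≠ -2)
    (hμ : IsEigenvalue n (hanoiPoly μ)) : IsEigenvalue (n + 1) μ := by
  obtain ⟨s, hs0, hs⟩ := hμ
  refine ⟨fun u => (μ + 1) * s (Fin.tail u) + s (avoidGen (u 0) (Fin.tail u)), ?_, ?_⟩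
  · contrapose! hs0
    funext t
    have h := congrFun hs0 (Fin.cons 0 t)
    have hσ := congrFun hs0 (Fin.cons 0 (avoidGen 0 t))
    simp only [Fin.cons_zero, Fin.tail_cons, avoidGen_involutive 0 t, Pi.zero_apply] at h hσ
    have : ((μ + 1) ^ 2 - 1) * s t = 0 := by linear_combination (μ + 1) * h - hσ
    simpa [sq_add_one_sub_one_ne_zero h0 h2] using this
  · refine isEigenfunction_succ_iff.2 fun k t => ?_
    simp only [Fin.cons_zero, Fin.tail_cons, avoidGen_involutive k t]
    rw [Finset.sum_add_distrib, hs t, Finset.sum_const, Finset.card_univ, Fintype.card_fin,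
      nsmul_eq_mul]
    unfold hanoiPoly
    ring

theorem isEigenvalue_succ_iff {n : ℕ} {μ : ℝ} (h0 : μ ≠ 0) (h2 : μ ≠ -2) :
    IsEigenvalue (n + 1) μ ↔ IsEigenvalue n (hanoiPoly μ) :=
  ⟨IsEigenvalue.of_succ h0 h2, IsEigenvalue.succ h0 h2⟩

theorem isEigenvalue_zero_iff {μ : ℝ} : IsEigenvalue 0 μ ↔ μ = 3 := by
  have hσ : ∀ (h : Fin 3) (u : Word 0), avoidGen h u = u := fun _ _ => Subsingleton.elim _ _
  simp only [IsEigenvalue, IsEigenfunction, hσ, Finset.sum_const, Finset.card_univ,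
    Fintype.card_fin, nsmul_eq_mul]
  constructor
  · rintro ⟨x, hx0, hx⟩
    obtain ⟨u, hu⟩ := Function.ne_iff.1 hx0
    exact (mul_right_cancel₀ hu (hx u)).symm
  · rintro rfl
    exact ⟨fun _ => 1, fun h => one_ne_zero (congrFun h Fin.elim0), fun _ => by norm_num⟩

theorem isEigenvalue_succ_zero (n : ℕ) : IsEigenvalue (n + 1) 0 := by
  refine ⟨fun u => ![1, -1, 0] (u 0), fun h => ?_, ?_⟩
  · simpa using congrFun h (Fin.cons 0 0)
  · refine isEigenfunction_succ_iff.2 fun k t => ?_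
    simp [Fin.sum_univ_three]

theorem not_isEigenvalue_one_neg_two : ¬IsEigenvalue 1 (-2) := by
  rintro ⟨x, hx0, hx⟩
  have hσ : ∀ (h : Fin 3) (t : Word 0), avoidGen h t = t := fun _ _ => Subsingleton.elim _ _
  rw [isEigenfunction_succ_iff] at hx
  simp only [hσ, Fin.sum_univ_three] at hx
  apply hx0
  rw [funext_iff, Fin.forall_fin_succ_pi]
  intro k t
  have := hx k t
  rw [Pi.zero_apply]
  linarith [hx 0 t, hx 1 t, hx 2 t]

theorem isEigenvalue_add_two_neg_two (n : ℕ) : IsEigenvalue (n + 2) (-2) := by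
  -- `g` has zero column sums, so `s = 0`; and `x_k ∘ σ_k = -x_k`, since `σ_k` swaps the two
  -- second letters other than `k`, on which `g k` takes opposite values (and `g k k = 0`).
  let g : Fin 3 → Fin 3 → ℝ := ![![0, 1, -1], ![-1, 0, 1], ![1, -1, 0]]
  refine ⟨fun u => g (u 0) (u 1) * if Fin.tail (Fin.tail u) = 0 then 1 else 0,
    fun h => ?_, ?_⟩
  · simpa [g] using congrFun h (Fin.cons 0 (Fin.cons 1 0))
  · refine isEigenfunction_succ_iff.2 fun k => Fin.forall_fin_succ_pi.2 fun m r => ?_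
    fin_cases k <;> fin_cases m <;>
      simp [g, avoidGen, levelMove_cons, Fin.sum_univ_three] <;> norm_num

theorem isEigenvalue_succ_neg_two_iff {n : ℕ} : IsEigenvalue (n + 1) (-2) ↔ n ≠ 0 := by
  rcases n with _ | n
  · simpa using not_isEigenvalue_one_neg_two
  · simpa using isEigenvalue_add_two_neg_two n

def hanoiSpectrum (n : ℕ) : Set ℝ :=
  {(3 : ℝ)} ∪ (⋃ i ∈ Finset.range n, hanoiPoly^[i] ⁻¹' {0}) ∪
    (⋃ j ∈ Finset.range (n - 1), hanoiPoly^[j] ⁻¹' {-2})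

theorem mem_hanoiSpectrum {n : ℕ} {μ : ℝ} :
    μ ∈ hanoiSpectrum n ↔
      μ = 3 ∨ (∃ i < n, hanoiPoly^[i] μ = 0) ∨ ∃ j < n - 1, hanoiPoly^[j] μ = -2 := by
  simp [hanoiSpectrum, or_assoc]

theorem mem_hanoiSpectrum_zero {μ : ℝ} : μ ∈ hanoiSpectrum 0 ↔ μ = 3 := by
  simp [mem_hanoiSpectrum]

theorem zero_mem_hanoiSpectrum_succ (n : ℕ) : 0 ∈ hanoiSpectrum (n + 1) :=
  mem_hanoiSpectrum.2 <| Or.inr <| Or.inl ⟨0, n.succ_pos, rfl⟩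

theorem neg_two_mem_hanoiSpectrum_succ_iff {n : ℕ} :
    -2 ∈ hanoiSpectrum (n + 1) ↔ n ≠ 0 := by
  rcases n with _ | n
  · norm_num [mem_hanoiSpectrum]
  · exact iff_of_true (mem_hanoiSpectrum.2 <| Or.inr <| Or.inr ⟨0, n.succ_pos, rfl⟩)
      n.succ_ne_zero

theorem hanoiPoly_eq_three_iff {μ : ℝ} : hanoiPoly μ = 3 ↔ μ = 3 ∨ μ = -2 := by
  rw [hanoiPoly, ← sub_eq_zero, show μ ^ 2 - μ - 3 - 3 = (μ - 3) * (μ + 2) by ring,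
    mul_eq_zero, sub_eq_zero, add_eq_zero_iff_eq_neg]

theorem mem_hanoiSpectrum_succ_iff {n : ℕ} {μ : ℝ} (h0 : μ ≠ 0) (h2 : μ ≠ -2) :
    μ ∈ hanoiSpectrum (n + 1) ↔ hanoiPoly μ ∈ hanoiSpectrum n := by
  have shift {p : ℕ → Prop} (hp : ¬p 0) {m : ℕ} :
      (∃ i < m, p i) ↔ ∃ i < m - 1, p (i + 1) := by
    rcases m with _ | m
    · simp
    · rw [Nat.exists_lt_succ_left, or_iff_right hp, Nat.add_sub_cancel]
  rw [mem_hanoiSpectrum, mem_hanoiSpectrum, hanoiPoly_eq_three_iff, or_iff_left h2,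
    shift (p := fun i => hanoiPoly^[i] μ = 0) h0, shift (p := fun i => hanoiPoly^[i] μ = -2) h2]
  simp only [Function.iterate_succ_apply, Nat.add_sub_cancel]

theorem isEigenvalue_iff_mem_hanoiSpectrum (n : ℕ) (μ : ℝ) :
    IsEigenvalue n μ ↔ μ ∈ hanoiSpectrum n := by
  induction n generalizing μ with
  | zero => rw [isEigenvalue_zero_iff, mem_hanoiSpectrum_zero]
  | succ n ih =>
    by_cases h0 : μ = 0
    · subst h0
      exact iff_of_true (isEigenvalue_succ_zero n) (zero_mem_hanoiSpectrum_succ n)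
    by_cases h2 : μ = -2
    · rw [h2, isEigenvalue_succ_neg_two_iff, neg_two_mem_hanoiSpectrum_succ_iff]
    rw [isEigenvalue_succ_iff h0 h2, ih, mem_hanoiSpectrum_succ_iff h0 h2]

end Hanoi3

theorem hanoi3_spectrum_general (n : ℕ) :
    spectrum ℝ (adjMat 3 n) =
      {(3 : ℝ)} ∪ (⋃ i ∈ Finset.range n, hanoiPoly^[i] ⁻¹' {0}) ∪
        (⋃ j ∈ Finset.range (n - 1), hanoiPoly^[j] ⁻¹' {-2}) := by
  ext μ
  exact Hanoi3.mem_spectrum_adjMat_three_iff.trans (Hanoi3.isEigenvalue_iff_mem_hanoiSpectrum n μ)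

/-- For `H(3)` and every `n ≥ 1`, the set of real eigenvalues of the
adjacency matrix `T_n` of the level-`n` Schreier graph equals
`{3} ∪ ⋃_{i=0}^{n-1} f⁻ⁱ({0}) ∪ ⋃_{j=0}^{n-2} f⁻ʲ({-2})` where `f(x) = x² - x - 3`. -/
theorem hanoi3_spectrum (n : ℕ) (hn : 1 ≤ n) :
    spectrum ℝ (adjMat 3 n) =
      {(3 : ℝ)} ∪ (⋃ i ∈ Finset.range n, hanoiPoly^[i] ⁻¹' {0}) ∪
        (⋃ j ∈ Finset.range (n - 1), hanoiPoly^[j] ⁻¹' {-2}) :=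
  hanoi3_spectrum_general n
end

section
/- Let f(x) = x² − x − 3 and let f^{−i}(B) denote the preimage of B ⊆ ℝ under the i-th iterate of f. Then in ℝ the closure of the set {3} ∪ ⋃_{i=0}^{∞} f^{−i}({0, −2}) equals the closure of the set ⋃_{i=0}^{∞} f^{−i}({0}). -/
/-!
Write `S = ⋃ i, f⁻ⁱ({0})`. Since `f(-2) = 3 = f(3)`, every point of `f⁻ⁱ({-2})` lies in
`f⁻⁽ⁱ⁺¹⁾({3})`, so it suffices to show that `3 ∈ closure S` and that `closure S` is backward
invariant under `f`. Both come from the two inverse branches `g±(t) = (1 ± √(13 + 4t)) / 2` of `f`: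
they are continuous and map `S ⊆ [-2, ∞)` into `S`, so they map `closure S` into itself; and `g₊`
contracts `[0, 3]` towards its fixed point `3` by a factor `1/4`, so `g₊ⁿ(0) ∈ S` tends to `3`.
-/

open Set Filter Topology

section BackwardOrbit

variable {X : Type*} {f g : X → X} {A : Set X}

theorem mem_iUnion_preimage_iterate_of_map_mem {x : X} (h : f x ∈ ⋃ i : ℕ, f^[i] ⁻¹' A) :
    x ∈ ⋃ i : ℕ, f^[i] ⁻¹' A := by
  obtain ⟨i, hi⟩ := mem_iUnion.1 h
  exact mem_iUnion.2 ⟨i + 1, by rwa [mem_preimage, Function.iterate_succ_apply]⟩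

theorem mapsTo_iUnion_preimage_iterate (hfg : ∀ t ∈ ⋃ i : ℕ, f^[i] ⁻¹' A, f (g t) = t) :
    MapsTo g (⋃ i : ℕ, f^[i] ⁻¹' A) (⋃ i : ℕ, f^[i] ⁻¹' A) := fun t ht =>
  mem_iUnion_preimage_iterate_of_map_mem (by rwa [hfg t ht])

theorem mem_closure_iUnion_preimage_iterate_of_map_mem [TopologicalSpace X] (hg : Continuous g)
    (hfg : ∀ t ∈ ⋃ i : ℕ, f^[i] ⁻¹' A, f (g t) = t) {x : X} (hx : g (f x) = x)
    (hfx : f x ∈ closure (⋃ i : ℕ, f^[i] ⁻¹' A)) : x ∈ closure (⋃ i : ℕ, f^[i] ⁻¹' A) :=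
  hx ▸ (mapsTo_iUnion_preimage_iterate hfg).closure hg hfx

end BackwardOrbit

theorem tendsto_iterate_of_dist_le_mul {X : Type*} [PseudoMetricSpace X] {g : X → X} {s : Set X}
    {p x : X} {c : ℝ} (hc₀ : 0 ≤ c) (hc₁ : c < 1) (hs : MapsTo g s s)
    (hg : ∀ t ∈ s, dist (g t) p ≤ c * dist t p) (hx : x ∈ s) :
    Tendsto (fun n => g^[n] x) atTop (𝓝 p) := by
  have hdist : ∀ n, dist (g^[n] x) p ≤ c ^ n * dist x p := by
    intro n
    induction n with
    | zero => simp
    | succ n ih =>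
      rw [Function.iterate_succ_apply', pow_succ', mul_assoc]
      exact (hg _ (hs.iterate n hx)).trans (mul_le_mul_of_nonneg_left ih hc₀)
  refine tendsto_iff_dist_tendsto_zero.2 (squeeze_zero (fun _ => dist_nonneg) hdist ?_)
  simpa using (tendsto_pow_atTop_nhds_zero_of_lt_one hc₀ hc₁).mul_const (dist x p)

theorem hanoiPoly_mapsTo_Ioi_three : MapsTo hanoiPoly (Ioi 3) (Ioi 3) := fun t (ht : 3 < t) => by
  show 3 < t ^ 2 - t - 3
  nlinarith

theorem neg_two_le_of_mem_iUnion_preimage_iterate_hanoiPoly {t : ℝ}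
    (ht : t ∈ ⋃ i : ℕ, hanoiPoly^[i] ⁻¹' {0}) : -2 ≤ t := by
  obtain ⟨i, hi⟩ := mem_iUnion.1 ht
  by_contra! h
  cases i with
  | zero =>
    have : t = 0 := hi
    linarith
  | succ i =>
    have hft : 3 < hanoiPoly t := by
      show 3 < t ^ 2 - t - 3
      nlinarith
    have := hanoiPoly_mapsTo_Ioi_three.iterate i hft
    rw [← Function.iterate_succ_apply, mem_preimage.1 hi] at this
    norm_num at this

/-- For `s = 1` and `s = -1`, the two inverse branches of `hanoiPoly`. -/
noncomputable def hanoiBranch (s t : ℝ) : ℝ := (1 + s * √(13 + 4 * t)) / 2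

theorem continuous_hanoiBranch (s : ℝ) : Continuous (hanoiBranch s) := by
  unfold hanoiBranch
  fun_prop

theorem hanoiPoly_hanoiBranch {s t : ℝ} (hs : s ^ 2 = 1) (ht : -13 / 4 ≤ t) :
    hanoiPoly (hanoiBranch s t) = t := by
  have hsq : √(13 + 4 * t) ^ 2 = 13 + 4 * t := Real.sq_sqrt (by linarith)
  simp only [hanoiPoly, hanoiBranch]
  linear_combination (√(13 + 4 * t) ^ 2 / 4) * hs + hsq / 4

theorem exists_hanoiBranch_hanoiPoly_eq (x : ℝ) :
    ∃ s : ℝ, s ^ 2 = 1 ∧ hanoiBranch s (hanoiPoly x) = x := by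
  have hdisc : 13 + 4 * hanoiPoly x = (2 * x - 1) ^ 2 := by simp only [hanoiPoly]; ring
  rcases le_total (1 / 2) x with hx | hx
  · refine ⟨1, by norm_num, ?_⟩
    rw [hanoiBranch, hdisc, Real.sqrt_sq (by linarith)]
    ring
  · refine ⟨-1, by norm_num, ?_⟩
    rw [hanoiBranch, hdisc, ← neg_sq, Real.sqrt_sq (by linarith)]
    ring

theorem hanoiPoly_hanoiBranch_of_mem {s t : ℝ} (hs : s ^ 2 = 1)
    (ht : t ∈ ⋃ i : ℕ, hanoiPoly^[i] ⁻¹' {0}) : hanoiPoly (hanoiBranch s t) = t :=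
  hanoiPoly_hanoiBranch hs (by linarith [neg_two_le_of_mem_iUnion_preimage_iterate_hanoiPoly ht])

theorem mem_closure_of_iterate_hanoiPoly_mem_closure (n : ℕ) {x : ℝ}
    (hx : hanoiPoly^[n] x ∈ closure (⋃ i : ℕ, hanoiPoly^[i] ⁻¹' {0})) :
    x ∈ closure (⋃ i : ℕ, hanoiPoly^[i] ⁻¹' {0}) := by
  induction n generalizing x with
  | zero => exact hx
  | succ n ih =>
    obtain ⟨s, hs, hsx⟩ := exists_hanoiBranch_hanoiPoly_eq x
    exact mem_closure_iUnion_preimage_iterate_of_map_mem (continuous_hanoiBranch s)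
      (fun t ht => hanoiPoly_hanoiBranch_of_mem hs ht) hsx (ih hx)

theorem mapsTo_hanoiBranch_one_Icc : MapsTo (hanoiBranch 1) (Icc 0 3) (Icc 0 3) := by
  rintro t ⟨ht₀, ht₃⟩
  have hsq : √(13 + 4 * t) ^ 2 = 13 + 4 * t := Real.sq_sqrt (by linarith)
  have := Real.sqrt_nonneg (13 + 4 * t)
  constructor <;> simp only [hanoiBranch] <;> nlinarith

theorem dist_hanoiBranch_one_three_le {t : ℝ} (ht : t ∈ Icc (0 : ℝ) 3) :
    dist (hanoiBranch 1 t) 3 ≤ 1 / 4 * dist t 3 := by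
  obtain ⟨ht₀, ht₃⟩ := ht
  have hsq : √(13 + 4 * t) ^ 2 = 13 + 4 * t := Real.sq_sqrt (by linarith)
  have hsqrt : 3 ≤ √(13 + 4 * t) := by nlinarith [Real.sqrt_nonneg (13 + 4 * t)]
  have hle : hanoiBranch 1 t ≤ 3 := (mapsTo_hanoiBranch_one_Icc ⟨ht₀, ht₃⟩).2
  rw [Real.dist_eq, Real.dist_eq, abs_of_nonpos (by linarith), abs_of_nonpos (by linarith)]
  simp only [hanoiBranch] at hle ⊢
  nlinarith

theorem three_mem_closure_iUnion_preimage_iterate_hanoiPoly :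
    (3 : ℝ) ∈ closure (⋃ i : ℕ, hanoiPoly^[i] ⁻¹' {0}) := by
  have hzero : (0 : ℝ) ∈ ⋃ i : ℕ, hanoiPoly^[i] ⁻¹' {0} := mem_iUnion.2 ⟨0, rfl⟩
  have hmaps := mapsTo_iUnion_preimage_iterate fun t ht =>
    hanoiPoly_hanoiBranch_of_mem (one_pow (M := ℝ) 2) ht
  exact mem_closure_of_tendsto
    (tendsto_iterate_of_dist_le_mul (by norm_num) (by norm_num) mapsTo_hanoiBranch_one_Icc
      (fun t ht => dist_hanoiBranch_one_three_le ht) (by norm_num : (0 : ℝ) ∈ Icc 0 3))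
    (Eventually.of_forall fun n => hmaps.iterate n hzero)

/-- With `f(x) = x² - x - 3`, the closure in `ℝ` of
`{3} ∪ ⋃_{i≥0} f⁻ⁱ({0, -2})` equals the closure of `⋃_{i≥0} f⁻ⁱ({0})`. -/
theorem hanoi3_spectrum_closure :
    closure ({(3 : ℝ)} ∪ ⋃ i : ℕ, hanoiPoly^[i] ⁻¹' {0, -2}) =
      closure (⋃ i : ℕ, hanoiPoly^[i] ⁻¹' {0}) := by
  have h3 := three_mem_closure_iUnion_preimage_iterate_hanoiPoly
  refine subset_antisymm (closure_minimal ?_ isClosed_closure)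
    (closure_mono (subset_union_of_subset_right (iUnion_mono fun i =>
      preimage_mono (singleton_subset_iff.2 (mem_insert 0 _))) _))
  refine union_subset (singleton_subset_iff.2 h3) (iUnion_subset fun i x hx => ?_)
  rcases hx with hx | hx
  · exact subset_closure (mem_iUnion.2 ⟨i, hx⟩)
  · refine mem_closure_of_iterate_hanoiPoly_mem_closure (i + 1) ?_
    have hx₂ : hanoiPoly^[i] x = -2 := hx
    rwa [Function.iterate_succ_apply', hx₂, show hanoiPoly (-2) = 3 by norm_num [hanoiPoly]]
end

section
/- Let f(x) = x² − x − 3 and let I = ⋃_{i=0}^{∞} f^{−i}({0}) ⊆ ℝ, where f^{−i} denotes the preimage under the i-th iterate of f. Then the set J of accumulation points of I is nonempty, compact, totally disconnected, and perfect (has no isolated points); hence J is homeomorphic to the Cantor set. -/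
open Filter Set Topology

namespace Hanoi3

noncomputable def g (b : Bool) (y : ℝ) : ℝ :=
  (1 + (if b then 1 else -1) * Real.sqrt (4 * y + 13)) / 2

lemma f_g (b : Bool) {y : ℝ} (hy : -2 ≤ y) : hanoiPoly (g b y) = y := by
  have h13 : (0:ℝ) ≤ 4 * y + 13 := by linarith
  have hs : Real.sqrt (4*y+13) ^ 2 = 4*y+13 := Real.sq_sqrt h13
  have he : ((if b then (1:ℝ) else -1))^2 = 1 := by cases b <;> norm_num
  show ((1 + (if b then (1:ℝ) else -1) * Real.sqrt (4*y+13))/2)^2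
      - (1 + (if b then (1:ℝ) else -1) * Real.sqrt (4*y+13))/2 - 3 = y
  linear_combination (Real.sqrt (4*y+13)^2/4) * he + (1/4) * hs

lemma sqrt_bounds {y : ℝ} (hy : y ∈ Icc (-2:ℝ) 3) :
    2 ≤ Real.sqrt (4*y+13) ∧ Real.sqrt (4*y+13) ≤ 5 := by
  obtain ⟨h1, h2⟩ := hy
  constructor
  · have : (2:ℝ) = Real.sqrt 4 := by
      rw [show (4:ℝ) = 2^2 by norm_num, Real.sqrt_sq (by norm_num)]
    rw [this]; exact Real.sqrt_le_sqrt (by linarith)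
  · have : (5:ℝ) = Real.sqrt 25 := by
      rw [show (25:ℝ) = 5^2 by norm_num, Real.sqrt_sq (by norm_num)]
    rw [this]; exact Real.sqrt_le_sqrt (by linarith)

lemma g_true_mem {y : ℝ} (hy : y ∈ Icc (-2:ℝ) 3) : g true y ∈ Icc (3/2:ℝ) 3 := by
  obtain ⟨h1, h2⟩ := sqrt_bounds hy
  unfold g; constructor <;> simp only [if_true] <;> [linarith; linarith]

lemma g_false_mem {y : ℝ} (hy : y ∈ Icc (-2:ℝ) 3) : g false y ∈ Icc (-2:ℝ) (-1/2) := by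
  obtain ⟨h1, h2⟩ := sqrt_bounds hy
  unfold g; constructor <;> simp only [Bool.false_eq_true, if_false] <;> [linarith; linarith]

lemma g_mem (b : Bool) {y : ℝ} (hy : y ∈ Icc (-2:ℝ) 3) : g b y ∈ Icc (-2:ℝ) 3 := by
  cases b
  · obtain ⟨h1, h2⟩ := g_false_mem hy; exact ⟨h1, by linarith⟩
  · obtain ⟨h1, h2⟩ := g_true_mem hy; exact ⟨by linarith, h2⟩

lemma g_lip (b : Bool) {y y' : ℝ} (hy : y ∈ Icc (-2:ℝ) 3) (hy' : y' ∈ Icc (-2:ℝ) 3) :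
    |g b y - g b y'| ≤ |y - y'| / 2 := by
  have h13 : (0:ℝ) ≤ 4 * y + 13 := by linarith [hy.1]
  have h13' : (0:ℝ) ≤ 4 * y' + 13 := by linarith [hy'.1]
  set u := Real.sqrt (4*y+13) with hu
  set v := Real.sqrt (4*y'+13) with hv
  have hu2 : u ^ 2 = 4*y+13 := Real.sq_sqrt h13
  have hv2 : v ^ 2 = 4*y'+13 := Real.sq_sqrt h13'
  have hul : 2 ≤ u := (sqrt_bounds hy).1
  have hvl : 2 ≤ v := (sqrt_bounds hy').1
  have key : (u - v) * (u + v) = 4 * (y - y') := by linear_combination hu2 - hv2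
  have habs : |u - v| * (u + v) = 4 * |y - y'| := by
    have : |u - v| * |u + v| = |4 * (y - y')| := by rw [← abs_mul, key]
    rwa [abs_of_nonneg (show (0:ℝ) ≤ u + v by linarith), abs_mul,
      abs_of_nonneg (show (0:ℝ) ≤ 4 by norm_num)] at this
  have huv : |u - v| ≤ |y - y'| := by nlinarith [abs_nonneg (u - v)]
  have he : |(if b then (1:ℝ) else -1)| = 1 := by cases b <;> simp
  have : g b y - g b y' = (if b then (1:ℝ) else -1) * (u - v) / 2 := by
    unfold g; ring
  rw [this, abs_div, abs_mul, he, one_mul]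
  · simp only [abs_two]; linarith


noncomputable def G : (ℕ → Bool) → ℕ → ℝ → ℝ
  | _, 0, x => x
  | s, n+1, x => g (s 0) (G (fun k => s (k+1)) n x)

lemma G_mem (s : ℕ → Bool) : ∀ (n : ℕ) {x : ℝ}, x ∈ Icc (-2:ℝ) 3 → G s n x ∈ Icc (-2:ℝ) 3
  | 0, x, hx => hx
  | n+1, x, hx => g_mem (s 0) (G_mem (fun k => s (k+1)) n hx)

lemma G_prefix : ∀ (n : ℕ) (s t : ℕ → Bool) (x : ℝ), (∀ k < n, s k = t k) → G s n x = G t n x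
  | 0, _, _, _, _ => rfl
  | n+1, s, t, x, hst => by
    show g (s 0) (G (fun k => s (k+1)) n x) = g (t 0) (G (fun k => t (k+1)) n x)
    rw [hst 0 (Nat.succ_pos n),
      G_prefix n (fun k => s (k+1)) (fun k => t (k+1)) x
        (fun k hk => hst (k+1) (Nat.succ_lt_succ hk))]

lemma G_lip (s : ℕ → Bool) : ∀ (n : ℕ) {x y : ℝ}, x ∈ Icc (-2:ℝ) 3 → y ∈ Icc (-2:ℝ) 3 →
    |G s n x - G s n y| ≤ |x - y| / 2 ^ n
  | 0, x, y, _, _ => by show |x - y| ≤ |x - y| / 2 ^ 0; simp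
  | n+1, x, y, hx, hy => by
    have h1 := g_lip (s 0) (G_mem (fun k => s (k+1)) n hx) (G_mem (fun k => s (k+1)) n hy)
    have h2 := G_lip (fun k => s (k+1)) n hx hy
    show |g (s 0) (G (fun k => s (k+1)) n x) - g (s 0) (G (fun k => s (k+1)) n y)| ≤ _
    calc _ ≤ |G (fun k => s (k+1)) n x - G (fun k => s (k+1)) n y| / 2 := h1
    _ ≤ (|x - y| / 2 ^ n) / 2 := by linarith
    _ = |x - y| / 2 ^ (n+1) := by ring

lemma f_iter_G (s : ℕ → Bool) : ∀ (n : ℕ) {x : ℝ}, x ∈ Icc (-2:ℝ) 3 →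
    hanoiPoly^[n] (G s n x) = x
  | 0, x, _ => rfl
  | n+1, x, hx => by
    show hanoiPoly^[n+1] (g (s 0) (G (fun k => s (k+1)) n x)) = x
    rw [Function.iterate_succ_apply, f_g (s 0) (G_mem (fun k => s (k+1)) n hx).1,
      f_iter_G (fun k => s (k+1)) n hx]

lemma G_comp (s : ℕ → Bool) : ∀ (n m : ℕ) (x : ℝ),
    G s (n + m) x = G s n (G (fun k => s (k + n)) m x)
  | 0, m, x => by
    rw [Nat.zero_add]
    exact G_prefix m s (fun k => s (k + 0)) x (fun k _ => by simp)
  | n+1, m, x => by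
    rw [show n + 1 + m = (n + m) + 1 from by omega]
    show g (s 0) (G (fun k => s (k+1)) (n + m) x)
      = g (s 0) (G (fun k => s (k+1)) n (G (fun k => s (k + (n+1))) m x))
    rw [G_comp (fun k => s (k+1)) n m x]
    rfl

/-- every real is in the image of some branch of its image -/
lemma exists_branch (x : ℝ) : ∃ b, g b (hanoiPoly x) = x := by
  have key : 4 * hanoiPoly x + 13 = (2*x-1)^2 := by unfold hanoiPoly; ring
  rcases le_or_gt (1/2 : ℝ) x with h | h
  · refine ⟨true, ?_⟩
    unfold g
    rw [key, Real.sqrt_sq_eq_abs, abs_of_nonneg (by linarith : (0:ℝ) ≤ 2*x-1)]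
    simp
  · refine ⟨false, ?_⟩
    unfold g
    rw [key, Real.sqrt_sq_eq_abs, abs_of_nonpos (by linarith : 2*x-1 ≤ (0:ℝ))]
    simp

/-- prepend -/
def cons (b : Bool) (s : ℕ → Bool) : ℕ → Bool
  | 0 => b
  | k+1 => s k

lemma G_cons (b : Bool) (s : ℕ → Bool) (n : ℕ) (x : ℝ) :
    G (cons b s) (n+1) x = g b (G s n x) := rfl

lemma surj_level : ∀ (n : ℕ) (x : ℝ), hanoiPoly^[n] x = 0 → ∃ s, x = G s n 0
  | 0, x, hx => ⟨fun _ => false, show x = 0 by simpa using hx⟩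
  | n+1, x, hx => by
    rw [Function.iterate_succ_apply] at hx
    obtain ⟨t, ht⟩ := surj_level n (hanoiPoly x) hx
    obtain ⟨b, hb⟩ := exists_branch x
    exact ⟨cons b t, by rw [G_cons, ← ht, hb]⟩

lemma preimage_finite (n : ℕ) : (hanoiPoly^[n] ⁻¹' {0}).Finite := by
  have hK : (0:ℝ) ∈ Icc (-2:ℝ) 3 := by constructor <;> norm_num
  have hsub : hanoiPoly^[n] ⁻¹' {0} ⊆
      (fun v : Fin n → Bool => G (fun k => if h : k < n then v ⟨k, h⟩ else false) n 0) '' univ := by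
    intro x hx
    obtain ⟨s, hs⟩ := surj_level n x (by simpa using hx)
    refine ⟨fun i => s i, mem_univ _, ?_⟩
    exact (G_prefix n _ s 0 (fun k hk => dif_pos hk)).trans hs.symm
  exact ((finite_univ (α := Fin n → Bool)).image _).subset hsub


lemma zero_mem : (0:ℝ) ∈ Icc (-2:ℝ) 3 := by constructor <;> norm_num

lemma dist_G_G (s : ℕ → Bool) (n m : ℕ) : dist (G s (n + m) 0) (G s n 0) ≤ 3 * (1/2) ^ n := by
  rw [Real.dist_eq, G_comp s n m 0]
  have hw : G (fun k => s (k + n)) m 0 ∈ Icc (-2:ℝ) 3 := G_mem _ m zero_mem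
  have h1 := G_lip s n (x := G (fun k => s (k + n)) m 0) (y := 0) hw zero_mem
  have h2 : |G (fun k => s (k + n)) m 0 - 0| ≤ 3 := by
    rw [sub_zero, abs_le]; exact ⟨by linarith [hw.1], hw.2⟩
  have h3 : (0:ℝ) < 2 ^ n := by positivity
  calc |G s n (G (fun k => s (k + n)) m 0) - G s n 0| ≤ _ / 2 ^ n := h1
  _ ≤ 3 / 2 ^ n := by gcongr
  _ = 3 * (1/2) ^ n := by rw [div_pow, one_pow]; ring

lemma cauchy_G (s : ℕ → Bool) : CauchySeq (fun n => G s n 0) := by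
  apply cauchySeq_of_le_geometric (1/2) 3 (by norm_num)
  intro n
  have := dist_G_G s n 1
  rwa [dist_comm] at this

noncomputable def h (s : ℕ → Bool) : ℝ := limUnder atTop (fun n => G s n 0)

lemma h_tendsto (s : ℕ → Bool) : Tendsto (fun n => G s n 0) atTop (𝓝 (h s)) :=
  (cauchy_G s).tendsto_limUnder

lemma h_mem (s : ℕ → Bool) : h s ∈ Icc (-2:ℝ) 3 :=
  isClosed_Icc.mem_of_tendsto (h_tendsto s) (Eventually.of_forall fun n => G_mem s n zero_mem)

lemma dist_h_G (s : ℕ → Bool) (n : ℕ) : dist (h s) (G s n 0) ≤ 3 * (1/2) ^ n := by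
  have ht : Tendsto (fun m => G s (n + m) 0) atTop (𝓝 (h s)) := by
    have := (h_tendsto s).comp (tendsto_add_atTop_nat n)
    simpa [Function.comp_def, Nat.add_comm] using this
  have hd : Tendsto (fun m => dist (G s (n + m) 0) (G s n 0)) atTop
      (𝓝 (dist (h s) (G s n 0))) := ht.dist tendsto_const_nhds
  exact le_of_tendsto hd (Eventually.of_forall fun m => dist_G_G s n m)

lemma g_cont (b : Bool) : Continuous (g b) := by
  have hs : Continuous fun y : ℝ => Real.sqrt (4 * y + 13) :=
    Real.continuous_sqrt.comp (by continuity)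
  unfold g
  exact (continuous_const.add (continuous_const.mul hs)).div_const 2

lemma h_shift (s : ℕ → Bool) : h s = g (s 0) (h (fun k => s (k + 1))) := by
  have h1 : Tendsto (fun n => G s (n + 1) 0) atTop (𝓝 (h s)) :=
    (h_tendsto s).comp (tendsto_add_atTop_nat 1)
  have h2 : Tendsto (fun n => G s (n + 1) 0) atTop
      (𝓝 (g (s 0) (h (fun k => s (k + 1))))) := by
    have : (fun n => G s (n + 1) 0)
        = fun n => g (s 0) (G (fun k => s (k + 1)) n 0) := rfl
    rw [this]
    exact ((g_cont (s 0)).tendsto _).comp (h_tendsto (fun k => s (k + 1)))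
  exact tendsto_nhds_unique h1 h2

lemma dist_h_h {s t : ℕ → Bool} {n : ℕ} (hst : ∀ k < n, s k = t k) :
    dist (h s) (h t) ≤ 6 * (1/2) ^ n := by
  have h1 := dist_h_G s n
  have h2 := dist_h_G t n
  have h3 : G s n 0 = G t n 0 := G_prefix n s t 0 hst
  rw [h3] at h1
  calc dist (h s) (h t) ≤ dist (h s) (G t n 0) + dist (G t n 0) (h t) := dist_triangle _ _ _
  _ ≤ 3 * (1/2)^n + 3 * (1/2)^n := add_le_add h1 (by rw [dist_comm]; exact h2)
  _ = 6 * (1/2)^n := by ring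

lemma G_cont : ∀ n : ℕ, Continuous (fun s : ℕ → Bool => G s n 0)
  | 0 => continuous_const
  | n+1 => by
    have hF : Continuous (fun s : ℕ → Bool => G (fun k => s (k + 1)) n 0) :=
      (G_cont n).comp (continuous_pi fun k => continuous_apply (k + 1))
    have hb : Continuous (fun s : ℕ → Bool => if s 0 then (1:ℝ) else -1) :=
      (continuous_of_discreteTopology
        (f := fun b : Bool => if b then (1:ℝ) else -1)).comp (continuous_apply 0)
    show Continuous fun s : ℕ → Bool =>
      (1 + (if s 0 then (1:ℝ) else -1) * Real.sqrt (4 * G (fun k => s (k + 1)) n 0 + 13)) / 2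
    exact (continuous_const.add (hb.mul (Real.continuous_sqrt.comp
      ((continuous_const.mul hF).add continuous_const)))).div_const 2

lemma h_cont : Continuous h := by
  have hu : TendstoUniformly (fun n (s : ℕ → Bool) => G s n 0) h atTop := by
    rw [Metric.tendstoUniformly_iff]
    intro ε hε
    have h0 : Tendsto (fun n : ℕ => 3 * (1/2:ℝ) ^ n) atTop (𝓝 0) := by
      simpa using (tendsto_pow_atTop_nhds_zero_of_lt_one (by norm_num) (by norm_num)
        (r := (1/2:ℝ))).const_mul 3
    filter_upwards [h0.eventually (gt_mem_nhds hε)] with n hn s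
    exact lt_of_le_of_lt (dist_h_G s n) hn
  exact hu.continuous (Eventually.of_forall G_cont).frequently

lemma h_inj_aux : ∀ (n : ℕ) (s t : ℕ → Bool), (∀ k < n, s k = t k) → s n ≠ t n → h s ≠ h t
  | 0, s, t, _, hne => by
    have hs := h_shift s
    have ht := h_shift t
    have hms := h_mem (fun k => s (k + 1))
    have hmt := h_mem (fun k => t (k + 1))
    cases hs0 : s 0 <;> cases ht0 : t 0
    · exact absurd (hs0.trans ht0.symm) hne
    · have b1 := (g_false_mem hms).2
      have b2 := (g_true_mem hmt).1
      rw [hs0] at hs; rw [ht0] at ht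
      intro hcon; rw [hs, ht] at hcon; linarith [hcon.le, hcon.ge]
    · have b1 := (g_true_mem hms).1
      have b2 := (g_false_mem hmt).2
      rw [hs0] at hs; rw [ht0] at ht
      intro hcon; rw [hs, ht] at hcon; linarith [hcon.le, hcon.ge]
    · exact absurd (hs0.trans ht0.symm) hne
  | n+1, s, t, hst, hne => by
    have h0 : s 0 = t 0 := hst 0 (Nat.succ_pos n)
    intro hcon
    have hfs : hanoiPoly (h s) = h (fun k => s (k + 1)) := by
      rw [h_shift s]; exact f_g (s 0) (h_mem _).1
    have hft : hanoiPoly (h t) = h (fun k => t (k + 1)) := by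
      rw [h_shift t]; exact f_g (t 0) (h_mem _).1
    have : h (fun k => s (k + 1)) = h (fun k => t (k + 1)) := by
      rw [← hfs, ← hft, hcon]
    exact h_inj_aux n (fun k => s (k + 1)) (fun k => t (k + 1))
      (fun k hk => hst (k + 1) (Nat.succ_lt_succ hk)) hne this

lemma h_inj : Function.Injective h := by
  intro s t hst
  by_contra hne
  have hex : ∃ n, s n ≠ t n := by
    by_contra hall
    push_neg at hall
    exact hne (funext hall)
  classical
  let n := Nat.find hex
  exact h_inj_aux n s t
    (fun k hk => by_contra fun hne' => Nat.find_min hex hk hne') (Nat.find_spec hex) hst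


noncomputable def I : Set ℝ := ⋃ i : ℕ, hanoiPoly^[i] ⁻¹' {0}

noncomputable def J : Set ℝ := {x | AccPt x (Filter.principal I)}

lemma G_mem_I (s : ℕ → Bool) (n : ℕ) : G s n 0 ∈ I :=
  mem_iUnion.2 ⟨n, by simp [f_iter_G s n zero_mem]⟩

lemma range_subset_J : range h ⊆ J := by
  rintro x ⟨s, rfl⟩
  rw [J, mem_setOf_eq, accPt_iff_nhds]
  intro U hU
  have hev : ∀ᶠ n in atTop, G s n 0 ∈ U := (h_tendsto s).eventually (eventually_mem_nhds_iff.mpr hU) |>.mono (fun n hn => mem_of_mem_nhds hn)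
  obtain ⟨N, hN⟩ := eventually_atTop.1 hev
  -- find n ≥ N with G s n 0 ≠ h s
  have key : ∃ n ≥ N, G s n 0 ≠ h s := by
    by_contra hcon
    push_neg at hcon
    have e1 : G s N 0 = h s := hcon N le_rfl
    have e2 : G s (N+1) 0 = h s := hcon (N+1) (Nat.le_succ_of_le le_rfl)
    have f1 : hanoiPoly^[N] (h s) = 0 := by rw [← e1]; exact f_iter_G s N zero_mem
    have f2 : hanoiPoly^[N+1] (h s) = 0 := by rw [← e2]; exact f_iter_G s (N+1) zero_mem
    rw [Function.iterate_succ_apply', f1] at f2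
    norm_num [hanoiPoly] at f2
  obtain ⟨n, hnN, hne⟩ := key
  exact ⟨G s n 0, ⟨hN n hnN, G_mem_I s n⟩, hne⟩

lemma J_subset_range : J ⊆ range h := by
  intro x hx
  have hclosed : IsClosed (range h) := (isCompact_range h_cont).isClosed
  rw [← hclosed.closure_eq]
  rw [Metric.mem_closure_iff]
  intro ε hε
  obtain ⟨N, hN⟩ := exists_pow_lt_of_lt_one (show (0:ℝ) < ε/8 by linarith)
    (show (1/2:ℝ) < 1 by norm_num)
  -- the finite set of low-level preimages
  have hAfin : (⋃ i ∈ Finset.range (N+1), hanoiPoly^[i] ⁻¹' {0}).Finite :=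
    Set.Finite.biUnion (Finset.range (N+1)).finite_toSet (fun i _ => preimage_finite i)
  set A : Set ℝ := ⋃ i ∈ Finset.range (N+1), hanoiPoly^[i] ⁻¹' {0} with hA
  have hBclosed : IsClosed (A \ {x}) := (hAfin.subset diff_subset).isClosed
  have hxB : x ∉ A \ {x} := fun hc => hc.2 rfl
  have hUnhds : (A \ {x})ᶜ ∩ Metric.ball x (ε/2) ∈ 𝓝 x :=
    Filter.inter_mem (hBclosed.isOpen_compl.mem_nhds hxB) (Metric.ball_mem_nhds x (by linarith))
  have hacc := (accPt_iff_nhds.1 (show AccPt x (𝓟 I) from hx)) _ hUnhds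
  obtain ⟨y, ⟨⟨hyB, hyball⟩, hyI⟩, hyx⟩ := hacc
  obtain ⟨i, hi⟩ := mem_iUnion.1 hyI
  have hiN : N + 1 ≤ i := by
    by_contra hlt
    push_neg at hlt
    exact hyB ⟨mem_biUnion (Finset.mem_coe.2 (Finset.mem_range.2 hlt)) hi, hyx⟩
  obtain ⟨s, hs⟩ := surj_level i y (by simpa using hi)
  refine ⟨h s, mem_range_self s, ?_⟩
  have d1 : dist (h s) y ≤ 3 * (1/2) ^ i := hs ▸ dist_h_G s i
  have d2 : (3:ℝ) * (1/2) ^ i ≤ 3 * (1/2) ^ N :=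
    mul_le_mul_of_nonneg_left
      (pow_le_pow_of_le_one (by norm_num) (by norm_num) (by omega)) (by norm_num)
  have d3 : (3:ℝ) * (1/2)^N < ε/2 := by nlinarith [hN]
  calc dist x (h s) ≤ dist x y + dist y (h s) := dist_triangle _ _ _
  _ < ε/2 + ε/2 := by
      refine add_lt_add (by simpa [Metric.mem_ball, dist_comm] using hyball) ?_
      rw [dist_comm]; exact lt_of_le_of_lt d1 (lt_of_le_of_lt d2 d3)
  _ = ε := by ring

lemma J_eq_range : J = range h :=
  Set.Subset.antisymm J_subset_range range_subset_J


lemma J_perfect : Perfect J := by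
  constructor
  · rw [J_eq_range]; exact (isCompact_range h_cont).isClosed
  · intro x hx
    rw [J_eq_range] at hx
    obtain ⟨s, rfl⟩ := hx
    rw [accPt_iff_nhds]
    intro U hU
    obtain ⟨ε, hε, hball⟩ := Metric.mem_nhds_iff.1 hU
    obtain ⟨n, hn⟩ := exists_pow_lt_of_lt_one (show (0:ℝ) < ε/7 by linarith)
      (show (1/2:ℝ) < 1 by norm_num)
    classical
    set t : ℕ → Bool := Function.update s n (!(s n)) with ht
    have hpre : ∀ k < n, s k = t k := fun k hk =>
      (Function.update_of_ne (Nat.ne_of_lt hk) _ s).symm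
    have htn : s n ≠ t n := by
      rw [ht, Function.update_self]
      cases s n <;> simp
    have hne : h t ≠ h s := (h_inj_aux n s t hpre htn · |>.elim) ∘ Eq.symm
    have hdist : dist (h s) (h t) ≤ 6 * (1/2)^n := dist_h_h hpre
    refine ⟨h t, ⟨hball ?_, J_eq_range ▸ mem_range_self t⟩, hne⟩
    rw [Metric.mem_ball, dist_comm]
    calc dist (h s) (h t) ≤ 6 * (1/2)^n := hdist
    _ < ε := by nlinarith [hn]

end Hanoi3

/-- Let `I = ⋃_{i≥0} f⁻ⁱ({0})` for `f(x) = x² - x - 3`, and let `J` be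
the set of accumulation points of `I`. Then `J` is nonempty, compact, totally
disconnected and perfect; hence `J` is homeomorphic to the Cantor set. -/
theorem hanoi3_julia_set_cantor :
    letI I : Set ℝ := ⋃ i : ℕ, hanoiPoly^[i] ⁻¹' {0}
    letI J : Set ℝ := {x | AccPt x (Filter.principal I)}
    J.Nonempty ∧ IsCompact J ∧ IsTotallyDisconnected J ∧ Perfect J ∧
      Nonempty (J ≃ₜ (ℕ → Bool)) := by
  show Hanoi3.J.Nonempty ∧ IsCompact Hanoi3.J ∧ IsTotallyDisconnected Hanoi3.J ∧
    Perfect Hanoi3.J ∧ Nonempty (Hanoi3.J ≃ₜ (ℕ → Bool))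
  have hJr : Hanoi3.J = range Hanoi3.h := Hanoi3.J_eq_range
  have hemb : Topology.IsEmbedding Hanoi3.h :=
    (Hanoi3.h_cont.isClosedEmbedding Hanoi3.h_inj).toIsEmbedding
  refine ⟨⟨Hanoi3.h (fun _ => false), hJr ▸ mem_range_self _⟩, ?_, ?_, ?_, ?_⟩
  · rw [hJr]; exact isCompact_range Hanoi3.h_cont
  · rw [hJr]; exact hemb.isTotallyDisconnected_range.2 inferInstance
  · exact Hanoi3.J_perfect
  · exact ⟨(Homeomorph.setCongr hJr).trans hemb.toHomeomorph.symm⟩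
end
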